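/- arXiv:2601.04084 — 7 statements merged into one kernel-verified Lean document; each statement's English description precedes it below -/
import Mathlib

section
/- For every integer m ≥ 3, forb(m, F(0,3,1,0)) = ⌊7m/3⌋ + 1. -/
/-!
Lower bound: cut the rows into `m / 3` consecutive blocks of at least three rows and take the
empty column together with, for every block `B`, the columns consisting of all rows before `B`
plus a singleton, a co-singleton or the whole of `B`. Two rows `i, j` with `j` not in a later
block than `i` are then separated only by "rows before `i`'s block, plus `{i}`" and "rows before
`i`'s block, plus `B \ {j}`"; a block of size `k` gives `2k + 1` columns, `2m + m / 3 + 1` in all.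

Upper bound, by induction on the set `R` of rows. The key consequence of avoidance is that three
columns containing a row `u` but not a row `v` force every column containing `v` to contain `u`.
Pick a row `a`. If at most two columns `X ∌ a` have `X ∪ {a}` in the family, deleting row `a`
merges at most two pairs of columns, while `7r / 3` grows by at least `2` per row. Otherwise fix
three such pairs `X i`, `X i ∪ {a}`, and let `L = ⋂ X i` and `F = {a} ∪ (⋃ X i \ L)`. A row
outside `L ∪ F` drags all of `F` along and a row of `F` drags all of `L`, so two columns agreeing
off `F` both equal `L` there: deleting the rows of `F` only merges the fibre over `L`. That fibre
has at most `7|F| / 3 + 1` columns: apart from `L`, `L ∪ F`, `X i` and `X i ∪ {a}`, each column is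
charged injectively to a row of `F \ {a}` that separates it from `a`, and when `|F| = 4` and
every row is charged, some `X i` equals `L`.
-/

open Finset

/-- A family `A` of distinct subsets of `Fin m` (columns of a simple `m`-rowed (0,1)-matrix)
avoids the configuration `F(0,p,1,0)`: for every ordered pair of distinct rows `i, j`,
if some member contains `j` but not `i`, then at most `p - 1` members contain `i` but not `j`. -/
def AvoidsF010 (p m : ℕ) (A : Finset (Finset (Fin m))) : Prop :=
  ∀ i j : Fin m, i ≠ j →
    (∃ X ∈ A, j ∈ X ∧ i ∉ X) →
    (A.filter fun Y => i ∈ Y ∧ j ∉ Y).card ≤ p - 1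

/-- `forb m p` is the maximum cardinality of a family of subsets of an `m`-element ground set
avoiding the configuration `F(0,p,1,0)`. -/
noncomputable def forb (m p : ℕ) : ℕ :=
  sSup {n | ∃ A : Finset (Finset (Fin m)), AvoidsF010 p m A ∧ A.card = n}

theorem Finset.three_le_card_filter {β : Type*} {A : Finset β} {Y₁ Y₂ Y₃ : β} {q : β → Prop}
    [DecidablePred q] (h₁ : Y₁ ∈ A) (h₂ : Y₂ ∈ A) (h₃ : Y₃ ∈ A)
    (h₁₂ : Y₁ ≠ Y₂) (h₁₃ : Y₁ ≠ Y₃) (h₂₃ : Y₂ ≠ Y₃)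
    (q₁ : q Y₁) (q₂ : q Y₂) (q₃ : q Y₃) : 3 ≤ #(A.filter q) :=
  two_lt_card_iff.2 ⟨Y₁, Y₂, Y₃, mem_filter.2 ⟨h₁, q₁⟩, mem_filter.2 ⟨h₂, q₂⟩,
    mem_filter.2 ⟨h₃, q₃⟩, h₁₂, h₁₃, h₂₃⟩

theorem Finset.card_le_card_image_add_of_injOn {β γ : Type*} [DecidableEq β] [DecidableEq γ]
    {s t : Finset β} (g : β → γ) (hg : Set.InjOn g (s \ t : Finset β)) : #s ≤ #(s.image g) + #t :=
  calc #s ≤ #(s \ t) + #t := card_le_card_sdiff_add_card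
    _ = #((s \ t).image g) + #t := by rw [card_image_of_injOn hg]
    _ ≤ #(s.image g) + #t := Nat.add_le_add_right (card_le_card (image_subset_image sdiff_subset)) _

theorem Finset.notMem_insert_of_ne {β : Type*} [DecidableEq β] {a w : β} {s : Finset β}
    (h₁ : w ≠ a) (h₂ : w ∉ s) : w ∉ insert a s := by
  simp [h₁, h₂]

variable {α : Type*}

section Free

variable [DecidableEq α]

def F010Free (p : ℕ) (A : Finset (Finset α)) : Prop :=
  ∀ i j : α, i ≠ j → (∃ X ∈ A, j ∈ X ∧ i ∉ X) → #(A.filter fun Y => i ∈ Y ∧ j ∉ Y) ≤ p - 1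

namespace F010Free

variable {p : ℕ} {A B : Finset (Finset α)}

theorem mono (hA : F010Free p A) (hBA : B ⊆ A) : F010Free p B := by
  rintro i j hij ⟨X, hX, hjX, hiX⟩
  exact (card_le_card (filter_subset_filter _ hBA)).trans (hA i j hij ⟨X, hBA hX, hjX, hiX⟩)

theorem image_sdiff (hA : F010Free p A) (S : Finset α) : F010Free p (A.image (· \ S)) := by
  rintro i j hij ⟨_, hX, hjX, hiX⟩
  obtain ⟨X, hXA, rfl⟩ := mem_image.1 hX
  rw [mem_sdiff] at hjX
  by_cases hiS : i ∈ S
  · convert Nat.zero_le _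
    refine card_eq_zero.2 (filter_eq_empty_iff.2 fun Y hY h => ?_)
    obtain ⟨Z, -, rfl⟩ := mem_image.1 hY
    exact (mem_sdiff.1 h.1).2 hiS
  have hsub : (A.image (· \ S)).filter (fun Y => i ∈ Y ∧ j ∉ Y) ⊆
      (A.filter fun Y => i ∈ Y ∧ j ∉ Y).image (· \ S) := by
    intro Y hY
    obtain ⟨hY, hiY, hjY⟩ := mem_filter.1 hY
    obtain ⟨Z, hZ, rfl⟩ := mem_image.1 hY
    exact mem_image.2 ⟨Z, mem_filter.2 ⟨hZ, (mem_sdiff.1 hiY).1,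
      fun h => hjY (mem_sdiff.2 ⟨h, hjX.2⟩)⟩, rfl⟩
  refine (card_le_card hsub).trans (card_image_le.trans (hA i j hij ⟨X, hXA, hjX.1, ?_⟩))
  exact fun h => hiX (mem_sdiff.2 ⟨h, hiS⟩)

variable {i j : α} {Y₁ Y₂ Y₃ : Finset α}

theorem mem_of_mem_of_three (hA : F010Free 3 A) (hij : i ≠ j)
    (h₁ : Y₁ ∈ A) (h₂ : Y₂ ∈ A) (h₃ : Y₃ ∈ A) (h₁₂ : Y₁ ≠ Y₂) (h₁₃ : Y₁ ≠ Y₃) (h₂₃ : Y₂ ≠ Y₃)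
    (q₁ : i ∈ Y₁ ∧ j ∉ Y₁) (q₂ : i ∈ Y₂ ∧ j ∉ Y₂) (q₃ : i ∈ Y₃ ∧ j ∉ Y₃)
    {Y : Finset α} (hY : Y ∈ A) (hjY : j ∈ Y) : i ∈ Y := by
  by_contra hiY
  have := hA i j hij ⟨Y, hY, hjY, hiY⟩
  have := three_le_card_filter (q := fun Y => i ∈ Y ∧ j ∉ Y) h₁ h₂ h₃ h₁₂ h₁₃ h₂₃ q₁ q₂ q₃
  omega

theorem eq_or_eq_of_witness (hA : F010Free 3 A) (hij : i ≠ j) {X : Finset α} (hX : X ∈ A)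
    (hjX : j ∈ X) (hiX : i ∉ X) (h₁ : Y₁ ∈ A) (h₂ : Y₂ ∈ A) (h₁₂ : Y₁ ≠ Y₂)
    (q₁ : i ∈ Y₁ ∧ j ∉ Y₁) (q₂ : i ∈ Y₂ ∧ j ∉ Y₂)
    {Y : Finset α} (hY : Y ∈ A) (hiY : i ∈ Y) (hjY : j ∉ Y) : Y = Y₁ ∨ Y = Y₂ := by
  by_contra! hne
  have := hA i j hij ⟨X, hX, hjX, hiX⟩
  have := three_le_card_filter (q := fun Y => i ∈ Y ∧ j ∉ Y) hY h₁ h₂ hne.1 hne.2 h₁₂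
    ⟨hiY, hjY⟩ q₁ q₂
  omega

end F010Free

theorem avoidsF010_iff {p m : ℕ} {A : Finset (Finset (Fin m))} : AvoidsF010 p m A ↔ F010Free p A :=
  Iff.rfl

end Free

section BlockSets

variable [DecidableEq α]

def blockSets (B : Finset α) : Finset (Finset α) := insert B (B.image singleton ∪ B.image B.erase)

variable {B S : Finset α} {i j : α}

theorem mem_blockSets : S ∈ blockSets B ↔ S = B ∨ (∃ x ∈ B, {x} = S) ∨ ∃ x ∈ B, B.erase x = S := by
  simp [blockSets]

theorem subset_of_mem_blockSets (hS : S ∈ blockSets B) : S ⊆ B := by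
  rcases mem_blockSets.1 hS with rfl | ⟨x, hx, rfl⟩ | ⟨x, -, rfl⟩
  · exact subset_rfl
  · exact singleton_subset_iff.2 hx
  · exact erase_subset x B

theorem nonempty_of_mem_blockSets (hB : 2 ≤ #B) (hS : S ∈ blockSets B) : S.Nonempty := by
  rcases mem_blockSets.1 hS with rfl | ⟨x, -, rfl⟩ | ⟨x, hx, rfl⟩
  · exact card_pos.1 (by omega)
  · exact singleton_nonempty x
  · exact card_pos.1 (by rw [card_erase_of_mem hx]; omega)

theorem eq_or_eq_of_mem_blockSets (hS : S ∈ blockSets B) (hiS : i ∈ S) (hjB : j ∈ B)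
    (hjS : j ∉ S) : S = {i} ∨ S = B.erase j := by
  rcases mem_blockSets.1 hS with rfl | ⟨x, -, rfl⟩ | ⟨x, -, rfl⟩
  · exact absurd hjB hjS
  · exact Or.inl (by rw [mem_singleton.1 hiS])
  · exact Or.inr (by rw [of_not_not fun hjx => hjS (mem_erase.2 ⟨hjx, hjB⟩)])

theorem card_blockSets (hB : 3 ≤ #B) : #(blockSets B) = 2 * #B + 1 := by
  have hcard : ∀ x ∈ B, #(B.erase x) = #B - 1 := fun x hx => card_erase_of_mem hx
  have hdisj : Disjoint (B.image singleton) (B.image B.erase) := by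
    simp only [disjoint_left, mem_image, not_exists, not_and]
    rintro _ ⟨x, -, rfl⟩ y hy h
    have := hcard y hy
    rw [h, card_singleton] at this
    omega
  have hnot : B ∉ B.image singleton ∪ B.image B.erase := by
    simp only [mem_union, mem_image, not_or, not_exists, not_and]
    refine ⟨fun x _ h => ?_, fun x hx h => ?_⟩
    · have := congrArg card h
      rw [card_singleton] at this
      omega
    · exact notMem_erase x B (by rwa [h])
  rw [blockSets, card_insert_of_notMem hnot, card_union_of_disjoint hdisj,
    card_image_of_injective _ singleton_injective, card_image_of_injOn (erase_injOn B)]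
  omega

end BlockSets

section Staircase

variable [Fintype α] (blk : α → ℕ)

def block (t : ℕ) : Finset α := univ.filter (blk · = t)

def below (t : ℕ) : Finset α := univ.filter (blk · < t)

variable {blk} {t : ℕ} {x : α}

theorem mem_block : x ∈ block blk t ↔ blk x = t := by simp [block]

theorem mem_below : x ∈ below blk t ↔ blk x < t := by simp [below]

theorem disjoint_below_block : Disjoint (below blk t) (block blk t) :=
  disjoint_left.2 fun _ hb hB => (mem_below.1 hb).ne (mem_block.1 hB)

variable [DecidableEq α] (blk)

def staircase (n : ℕ) : Finset (Finset α) :=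
  insert ∅ ((range n).biUnion fun t => (blockSets (block blk t)).image (below blk t ∪ ·))

variable {blk} {n : ℕ} {S C : Finset α}

theorem mem_staircase : C ∈ staircase blk n ↔
    C = ∅ ∨ ∃ t < n, ∃ S ∈ blockSets (block blk t), below blk t ∪ S = C := by
  simp [staircase]

theorem le_of_mem_below_union (hS : S ⊆ block blk t) (hx : x ∈ below blk t ∪ S) : blk x ≤ t := by
  rcases mem_union.1 hx with h | h
  · exact (mem_below.1 h).le
  · exact (mem_block.1 (hS h)).le


theorem staircase_free (blk : α → ℕ) (n : ℕ) : F010Free 3 (staircase blk n) := by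
  rintro i j hij ⟨X, hX, hjX, hiX⟩
  have hji : blk j ≤ blk i := by
    rcases mem_staircase.1 hX with rfl | ⟨t, -, S, hS, rfl⟩
    · exact absurd hjX (notMem_empty j)
    · exact (le_of_mem_below_union (subset_of_mem_blockSets hS) hjX).trans
        (not_lt.1 fun h => hiX (mem_union_left _ (mem_below.2 h)))
  have hsub : (staircase blk n).filter (fun Y => i ∈ Y ∧ j ∉ Y) ⊆
      {below blk (blk i) ∪ {i}, below blk (blk i) ∪ (block blk (blk i)).erase j} := by
    intro C hC
    obtain ⟨hC, hiC, hjC⟩ := mem_filter.1 hC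
    rcases mem_staircase.1 hC with rfl | ⟨t, -, S, hS, rfl⟩
    · exact absurd hiC (notMem_empty i)
    have hSB := subset_of_mem_blockSets hS
    have hit : blk i ≤ t := le_of_mem_below_union hSB hiC
    have htj : t ≤ blk j := not_lt.1 fun h => hjC (mem_union_left _ (mem_below.2 h))
    have hi : blk i = t := by omega
    have hiS : i ∈ S := (mem_union.1 hiC).resolve_left fun h => (mem_below.1 h).ne hi
    have hjB : j ∈ block blk t := mem_block.2 (by omega)
    subst hi
    rcases eq_or_eq_of_mem_blockSets hS hiS hjB fun h => hjC (mem_union_right _ h) with rfl | rfl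
    · exact mem_insert_self _ _
    · exact mem_insert_of_mem (mem_singleton_self _)
  exact (card_le_card hsub).trans (card_insert_le _ _)

theorem card_staircase (hblk : ∀ x, blk x < n) (hsize : ∀ t < n, 3 ≤ #(block blk t)) :
    #(staircase blk n) = 2 * Fintype.card α + n + 1 := by
  have hne : ∀ t < n, ∀ S ∈ blockSets (block blk t), S.Nonempty := fun t ht S hS =>
    nonempty_of_mem_blockSets (by have := hsize t ht; omega) hS
  have hlevel : ∀ t ∈ range n,
      #((blockSets (block blk t)).image (below blk t ∪ ·)) = 2 * #(block blk t) + 1 := by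
    intro t ht
    have hrestrict : ∀ S ∈ blockSets (block blk t), (below blk t ∪ S) ∩ block blk t = S :=
      fun S hS => by
        rw [union_inter_distrib_right, disjoint_iff_inter_eq_empty.1 disjoint_below_block,
          empty_union, inter_eq_left.2 (subset_of_mem_blockSets hS)]
    rw [card_image_of_injOn fun S hS S' hS' h => ?_, card_blockSets (hsize t (mem_range.1 ht))]
    rw [← hrestrict S hS, ← hrestrict S' hS']
    exact congrArg (· ∩ block blk t) h
  have hdisj : (range n : Set ℕ).PairwiseDisjoint
      fun t => (blockSets (block blk t)).image (below blk t ∪ ·) := by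
    intro t ht t' ht' htt'
    simp only [Function.onFun, disjoint_left, mem_image, not_exists, not_and]
    rintro _ ⟨S, hS, rfl⟩ S' hS' h
    obtain ⟨x, hx⟩ := hne t' (mem_range.1 ht') S' hS'
    obtain ⟨y, hy⟩ := hne t (mem_range.1 ht) S hS
    have h₁ := le_of_mem_below_union (subset_of_mem_blockSets hS) (h ▸ mem_union_right _ hx)
    have h₂ := le_of_mem_below_union (subset_of_mem_blockSets hS') (h.symm ▸ mem_union_right _ hy)
    rw [mem_block.1 (subset_of_mem_blockSets hS' hx)] at h₁
    rw [mem_block.1 (subset_of_mem_blockSets hS hy)] at h₂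
    exact htt' (le_antisymm h₂ h₁)
  have hempty :
      ∅ ∉ (range n).biUnion fun t => (blockSets (block blk t)).image (below blk t ∪ ·) := by
    simp only [mem_biUnion, mem_image, not_exists, not_and]
    intro t ht S hS h
    obtain ⟨x, hx⟩ := hne t (mem_range.1 ht) S hS
    exact notMem_empty x (h ▸ mem_union_right _ hx)
  have hsum : ∑ t ∈ range n, #(block blk t) = Fintype.card α := by
    rw [← card_univ, card_eq_sum_card_fiberwise fun x _ => mem_range.2 (hblk x)]
    rfl
  rw [staircase, card_insert_of_notMem hempty, card_biUnion hdisj, sum_congr rfl hlevel,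
    sum_add_distrib, ← mul_sum, hsum, sum_const, card_range, smul_eq_mul, mul_one]

end Staircase

theorem fin3_add_one_ne (t : Fin 3) : t + 1 ≠ t := by revert t; decide

theorem fin3_add_two_ne (t : Fin 3) : t + 2 ≠ t := by revert t; decide

theorem fin3_add_one_ne_add_two (t : Fin 3) : t + 1 ≠ t + 2 := by revert t; decide

def InAllBut (X : Fin 3 → Finset α) (w : α) (t : Fin 3) : Prop := ∀ i, w ∈ X i ↔ i ≠ t

def InOnly (X : Fin 3 → Finset α) (w : α) (s : Fin 3) : Prop := ∀ i, w ∈ X i ↔ i = s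

section Types

variable {X : Fin 3 → Finset α} {w : α} {s t : Fin 3}

theorem InAllBut.notMem (h : InAllBut X w t) : w ∉ X t := fun hw => (h t).1 hw rfl

theorem InAllBut.mem_add_one (h : InAllBut X w t) : w ∈ X (t + 1) := (h _).2 (fin3_add_one_ne t)

theorem InAllBut.mem_add_two (h : InAllBut X w t) : w ∈ X (t + 2) := (h _).2 (fin3_add_two_ne t)

theorem InAllBut.unique (h : InAllBut X w t) (h' : InAllBut X w s) : t = s :=
  not_not.1 fun hts => h.notMem ((h' t).2 hts)

theorem InOnly.mem (h : InOnly X w s) : w ∈ X s := (h s).2 rfl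

theorem InOnly.notMem_add_one (h : InOnly X w s) : w ∉ X (s + 1) :=
  fun hw => fin3_add_one_ne s ((h _).1 hw)

theorem InOnly.notMem_add_two (h : InOnly X w s) : w ∉ X (s + 2) :=
  fun hw => fin3_add_two_ne s ((h _).1 hw)

theorem InOnly.unique (h : InOnly X w s) (h' : InOnly X w t) : s = t := (h' s).1 h.mem

theorem exists_inAllBut_or_exists_inOnly (h₁ : ∃ i, w ∈ X i) (h₂ : ∃ i, w ∉ X i) :
    (∃ t, InAllBut X w t) ∨ ∃ s, InOnly X w s := by
  obtain ⟨i, hi⟩ := h₁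
  obtain ⟨k, hk⟩ := h₂
  by_cases h0 : w ∈ X 0 <;> by_cases h1 : w ∈ X 1 <;> by_cases h2 : w ∈ X 2
  · fin_cases k <;> contradiction
  · exact Or.inl ⟨2, fun i => by fin_cases i <;> simp [*]⟩
  · exact Or.inl ⟨1, fun i => by fin_cases i <;> simp [*]⟩
  · exact Or.inr ⟨0, fun i => by fin_cases i <;> simp [*]⟩
  · exact Or.inl ⟨0, fun i => by fin_cases i <;> simp [*]⟩
  · exact Or.inr ⟨1, fun i => by fin_cases i <;> simp [*]⟩
  · exact Or.inr ⟨2, fun i => by fin_cases i <;> simp [*]⟩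
  · fin_cases i <;> contradiction

theorem InAllBut.not_inOnly (h : InAllBut X w t) (h' : InOnly X w s) : False := by
  obtain ⟨i, hit, his⟩ : ∃ i, i ≠ t ∧ i ≠ s := by clear h h'; revert s t; decide
  exact his ((h' i).1 ((h i).2 hit))

theorem exists_forall_notMem_of_types {W : Finset α}
    (htype : ∀ w ∈ W, (∃ t, InAllBut X w t) ∨ ∃ s, InOnly X w s)
    (hMM : ∀ w ∈ W, ∀ w' ∈ W, ∀ t t', InAllBut X w t → InAllBut X w' t' → t = t')
    (hPP : ∀ w ∈ W, ∀ w' ∈ W, ∀ s s', InOnly X w s → InOnly X w' s' → s = s')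
    (hMP : ∀ w ∈ W, ∀ w' ∈ W, ∀ t s, InAllBut X w t → InOnly X w' s → t ≠ s) :
    ∃ i, ∀ w ∈ W, w ∉ X i := by
  by_cases hM : ∃ w ∈ W, ∃ t, InAllBut X w t
  · obtain ⟨w, hw, t, ht⟩ := hM
    refine ⟨t, fun w' hw' hw'X => ?_⟩
    rcases htype w' hw' with ⟨t', ht'⟩ | ⟨s, hs⟩
    · exact ht'.notMem (hMM w hw w' hw' t t' ht ht' ▸ hw'X)
    · exact hMP w hw w' hw' t s ht hs ((hs t).1 hw'X)
  · have hP : ∀ w ∈ W, ∃ s, InOnly X w s := fun w hw =>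
      (htype w hw).resolve_left fun ⟨t, ht⟩ => hM ⟨w, hw, t, ht⟩
    rcases W.eq_empty_or_nonempty with rfl | ⟨p, hp⟩
    · exact ⟨0, by simp⟩
    obtain ⟨s, hs⟩ := hP p hp
    refine ⟨s + 1, fun w hw hwX => ?_⟩
    obtain ⟨s', hs'⟩ := hP w hw
    exact fin3_add_one_ne s (((hs' _).1 hwX).trans (hPP p hp w hw s s' hs hs').symm)

end Types

section UpperBound

variable [DecidableEq α]

def core (X : Fin 3 → Finset α) : Finset α := X 0 ∩ X 1 ∩ X 2

def spread (X : Fin 3 → Finset α) : Finset α := (X 0 ∪ X 1 ∪ X 2) \ core X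

def frame (a : α) (X : Fin 3 → Finset α) : Finset α := insert a (spread X)

section Core

variable {X : Fin 3 → Finset α} {a u w : α}

theorem mem_core : u ∈ core X ↔ ∀ i, u ∈ X i := by
  simp only [core, mem_inter]
  exact ⟨fun h i => by fin_cases i <;> simp [h], fun h => ⟨⟨h 0, h 1⟩, h 2⟩⟩

theorem mem_spread : w ∈ spread X ↔ (∃ i, w ∈ X i) ∧ ∃ i, w ∉ X i := by
  simp only [spread, mem_sdiff, mem_union, mem_core, not_forall]
  exact and_congr_left' ⟨by rintro ((h | h) | h) <;> exact ⟨_, h⟩,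
    fun ⟨i, hi⟩ => by fin_cases i <;> simp_all⟩

theorem core_subset (i : Fin 3) : core X ⊆ X i := fun _ hu => mem_core.1 hu i

theorem subset_core_union_spread (i : Fin 3) : X i ⊆ core X ∪ spread X := by
  intro x hx
  by_cases hc : x ∈ core X
  · exact mem_union_left _ hc
  · exact mem_union_right _ (mem_spread.2 ⟨⟨i, hx⟩, not_forall.1 (mt mem_core.2 hc)⟩)

theorem X_eq_core_of_forall_notMem {i : Fin 3} (h : ∀ w ∈ spread X, w ∉ X i) : X i = core X :=
  Subset.antisymm (fun x hx => (mem_union.1 (subset_core_union_spread i hx)).resolve_right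
    fun hs => h x hs hx) (core_subset i)

theorem spread_subset {R : Finset α} (h : ∀ i, X i ⊆ R) :
    spread X ⊆ R := fun _ hw => (mem_spread.1 hw).1.elim fun i hi => h i hi

theorem inAllBut_or_inOnly (hw : w ∈ spread X) : (∃ t, InAllBut X w t) ∨ ∃ s, InOnly X w s :=
  exists_inAllBut_or_exists_inOnly (mem_spread.1 hw).1 (mem_spread.1 hw).2

end Core

structure ThreePairs (A : Finset (Finset α)) (a : α) (X : Fin 3 → Finset α) : Prop where
  free : F010Free 3 A
  mem : ∀ i, X i ∈ A
  insert_mem : ∀ i, insert a (X i) ∈ A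
  notMem : ∀ i, a ∉ X i
  injective : Function.Injective X

theorem F010Free.exists_threePairs {A : Finset (Finset α)} {a : α} (hA : F010Free 3 A)
    (h : 2 < #(A.filter fun X => a ∉ X ∧ insert a X ∈ A)) : ∃ X, ThreePairs A a X := by
  obtain ⟨x, y, z, hx, hy, hz, hxy, hxz, hyz⟩ := two_lt_card_iff.1 h
  have hmem : ∀ i, ![x, y, z] i ∈ A.filter fun X => a ∉ X ∧ insert a X ∈ A := by
    intro i; fin_cases i <;> assumption
  refine ⟨![x, y, z], hA, fun i => (mem_filter.1 (hmem i)).1,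
    fun i => (mem_filter.1 (hmem i)).2.2, fun i => (mem_filter.1 (hmem i)).2.1, ?_⟩
  intro i j hij
  fin_cases i <;> fin_cases j <;> simp_all [eq_comm]

namespace ThreePairs

variable {A : Finset (Finset α)} {a u w w' : α} {X : Fin 3 → Finset α} {s s' t t' : Fin 3}
  {Y Y' : Finset α}

theorem ne_of_mem (hc : ThreePairs A a X) {i : Fin 3} (h : w ∈ X i) : w ≠ a := by
  rintro rfl
  exact hc.notMem i h

theorem X_ne_insert (hc : ThreePairs A a X) (i j : Fin 3) : X i ≠ insert a (X j) :=
  fun h => hc.notMem i (h ▸ mem_insert_self a _)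

theorem insert_ne_insert (hc : ThreePairs A a X) {i j : Fin 3} (h : i ≠ j) :
    insert a (X i) ≠ insert a (X j) := fun he =>
  h (hc.injective (by simpa [erase_insert (hc.notMem _)] using congrArg (·.erase a) he))

theorem disjoint_core_frame (hc : ThreePairs A a X) : Disjoint (core X) (frame a X) := by
  refine disjoint_left.2 fun u hu hf => ?_
  rcases mem_insert.1 hf with rfl | hs
  · exact hc.notMem 0 (core_subset 0 hu)
  · exact (mem_spread.1 hs).2.elim fun i hi => hi (core_subset i hu)

theorem notMem_spread (hc : ThreePairs A a X) : a ∉ spread X := fun h =>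
  (mem_spread.1 h).1.elim fun i hi => hc.notMem i hi

theorem X_sdiff_frame (hc : ThreePairs A a X) (i : Fin 3) : X i \ frame a X = core X := by
  refine Subset.antisymm (fun x hx => ?_) (subset_sdiff.2 ⟨core_subset i, hc.disjoint_core_frame⟩)
  obtain ⟨hxX, hxf⟩ := mem_sdiff.1 hx
  exact (mem_union.1 (subset_core_union_spread i hxX)).resolve_right
    fun h => hxf (mem_insert_of_mem h)

theorem insert_X_sdiff_frame (hc : ThreePairs A a X) (i : Fin 3) :
    insert a (X i) \ frame a X = core X := by
  have ha : a ∈ frame a X := mem_insert_self a _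
  rw [insert_sdiff_of_mem _ ha, hc.X_sdiff_frame]

theorem filter_sdiff_frame (hc : ThreePairs A a X) :
    ThreePairs (A.filter (· \ frame a X = core X)) a X where
  free := hc.free.mono (filter_subset _ _)
  mem i := mem_filter.2 ⟨hc.mem i, hc.X_sdiff_frame i⟩
  insert_mem i := mem_filter.2 ⟨hc.insert_mem i, hc.insert_X_sdiff_frame i⟩
  notMem := hc.notMem
  injective := hc.injective

theorem eq_X_of_inAllBut (hc : ThreePairs A a X) (hw : InAllBut X w t) (hY : Y ∈ A)
    (hwY : w ∈ Y) (haY : a ∉ Y) : Y = X (t + 1) ∨ Y = X (t + 2) :=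
  hc.free.eq_or_eq_of_witness (hc.ne_of_mem hw.mem_add_one) (hc.insert_mem t)
    (mem_insert_self a _) (notMem_insert_of_ne (hc.ne_of_mem hw.mem_add_one) hw.notMem)
    (hc.mem _) (hc.mem _) (hc.injective.ne (fin3_add_one_ne_add_two t))
    ⟨hw.mem_add_one, hc.notMem _⟩ ⟨hw.mem_add_two, hc.notMem _⟩ hY hwY haY

theorem eq_insert_X_of_inOnly (hc : ThreePairs A a X) (hw : InOnly X w s) (hY : Y ∈ A)
    (haY : a ∈ Y) (hwY : w ∉ Y) : Y = insert a (X (s + 1)) ∨ Y = insert a (X (s + 2)) := by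
  have hwa := hc.ne_of_mem hw.mem
  exact hc.free.eq_or_eq_of_witness hwa.symm (hc.mem s) hw.mem (hc.notMem s)
    (hc.insert_mem _) (hc.insert_mem _) (hc.insert_ne_insert (fin3_add_one_ne_add_two s))
    ⟨mem_insert_self a _, notMem_insert_of_ne hwa hw.notMem_add_one⟩
    ⟨mem_insert_self a _, notMem_insert_of_ne hwa hw.notMem_add_two⟩ hY haY hwY

theorem eq_of_inAllBut_of_notMem (hc : ThreePairs A a X) (hw : InAllBut X w t)
    (hY : Y ∈ A) (hY' : Y' ∈ A) (haY : a ∈ Y) (haY' : a ∈ Y') (hwY : w ∉ Y) (hwY' : w ∉ Y')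
    (hYt : Y ≠ insert a (X t)) (hY't : Y' ≠ insert a (X t)) : Y = Y' := by
  have hwa := hc.ne_of_mem hw.mem_add_one
  refine ((hc.free.eq_or_eq_of_witness hwa.symm (hc.mem (t + 1)) hw.mem_add_one
    (hc.notMem _) (hc.insert_mem t) hY hYt.symm
    ⟨mem_insert_self a _, notMem_insert_of_ne hwa hw.notMem⟩ ⟨haY, hwY⟩
    hY' haY' hwY').resolve_left hY't).symm

theorem eq_of_inOnly_of_mem (hc : ThreePairs A a X) (hw : InOnly X w s)
    (hY : Y ∈ A) (hY' : Y' ∈ A) (haY : a ∉ Y) (haY' : a ∉ Y') (hwY : w ∈ Y) (hwY' : w ∈ Y')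
    (hYs : Y ≠ X s) (hY's : Y' ≠ X s) : Y = Y' := by
  have hwa := hc.ne_of_mem hw.mem
  refine ((hc.free.eq_or_eq_of_witness hwa (hc.insert_mem (s + 1)) (mem_insert_self a _)
    (notMem_insert_of_ne hwa hw.notMem_add_one) (hc.mem s) hY hYs.symm
    ⟨hw.mem, hc.notMem s⟩ ⟨hwY, haY⟩ hY' hwY' haY').resolve_left hY's).symm

theorem ne_of_inAllBut_of_inOnly (hc : ThreePairs A a X) (hw : InAllBut X w t)
    (hp : InOnly X u s) : t ≠ s := by
  rintro rfl
  have hpa := hc.ne_of_mem hp.mem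
  have hwp : w ≠ u := by
    rintro rfl
    exact hw.not_inOnly hp
  exact hw.notMem (hc.free.mem_of_mem_of_three hwp (hc.mem (t + 1)) (hc.mem (t + 2))
    (hc.insert_mem (t + 1)) (hc.injective.ne (fin3_add_one_ne_add_two t))
    (hc.X_ne_insert _ _) (hc.X_ne_insert _ _) ⟨hw.mem_add_one, hp.notMem_add_one⟩
    ⟨hw.mem_add_two, hp.notMem_add_two⟩
    ⟨mem_insert_of_mem hw.mem_add_one, notMem_insert_of_ne hpa hp.notMem_add_one⟩
    (hc.mem t) hp.mem)

theorem eq_of_inAllBut_of_inAllBut (hc : ThreePairs A a X) (hw : InAllBut X w t)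
    (hw' : InAllBut X w' t') (hY : Y ∈ A) (hY' : Y' ∈ A) (hYX : ∀ i, Y ≠ insert a (X i))
    (hY'X : ∀ i, Y' ≠ insert a (X i)) (haY : a ∈ Y) (haY' : a ∈ Y') (hwY : w ∉ Y)
    (hw'Y' : w' ∉ Y') (hne : Y ≠ Y') : t = t' := by
  have hw'Y : w' ∈ Y := by
    by_contra h
    exact hne (hc.eq_of_inAllBut_of_notMem hw' hY hY' haY haY' h hw'Y' (hYX t') (hY'X t'))
  by_contra htt'
  have hw'X : w' ∈ X t := (hw' t).2 htt'
  refine hw'.notMem (hc.free.mem_of_mem_of_three (ne_of_mem_of_not_mem hw'Y hwY)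
    (hc.mem t) (hc.insert_mem t) hY (hc.X_ne_insert t t)
    (fun h => hc.notMem t (h ▸ haY)) (hYX t).symm
    ⟨hw'X, hw.notMem⟩
    ⟨mem_insert_of_mem hw'X, notMem_insert_of_ne (hc.ne_of_mem hw.mem_add_one) hw.notMem⟩
    ⟨hw'Y, hwY⟩ (hc.mem t') ((hw t').2 (Ne.symm htt')))

theorem eq_of_inOnly_of_inOnly (hc : ThreePairs A a X) (hw : InOnly X w s)
    (hw' : InOnly X w' s') (hY : Y ∈ A) (hY' : Y' ∈ A) (hYX : ∀ i, Y ≠ X i)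
    (hY'X : ∀ i, Y' ≠ X i) (haY : a ∉ Y) (haY' : a ∉ Y') (hwY : w ∈ Y)
    (hw'Y' : w' ∈ Y') (hne : Y ≠ Y') : s = s' := by
  have hw'Y : w' ∉ Y := fun h =>
    hne (hc.eq_of_inOnly_of_mem hw' hY hY' haY haY' h hw'Y' (hYX s') (hY'X s'))
  by_contra hss'
  have hw'X : w' ∉ X s := fun h => hss' ((hw' s).1 h)
  refine hss' ((hw s').1 (hc.free.mem_of_mem_of_three (ne_of_mem_of_not_mem hwY hw'Y)
    (hc.mem s) (hc.insert_mem s) hY (hc.X_ne_insert s s) (hYX s).symm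
    (fun h => haY (h ▸ mem_insert_self a _))
    ⟨hw.mem, hw'X⟩ ⟨mem_insert_of_mem hw.mem, notMem_insert_of_ne (hc.ne_of_mem hw'.mem) hw'X⟩
    ⟨hwY, hw'Y⟩ (hc.mem s') hw'.mem)).symm

theorem mem_of_mem_core_of_mem (hc : ThreePairs A a X) (hu : u ∈ core X) (hY : Y ∈ A)
    (haY : a ∈ Y) : u ∈ Y :=
  hc.free.mem_of_mem_of_three (hc.ne_of_mem (core_subset 0 hu)) (hc.mem 0) (hc.mem 1) (hc.mem 2)
    (hc.injective.ne (by decide)) (hc.injective.ne (by decide)) (hc.injective.ne (by decide))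
    ⟨core_subset 0 hu, hc.notMem 0⟩ ⟨core_subset 1 hu, hc.notMem 1⟩
    ⟨core_subset 2 hu, hc.notMem 2⟩ hY haY

theorem mem_of_mem_core_of_mem_spread (hc : ThreePairs A a X) (hu : u ∈ core X)
    (hw : w ∈ spread X) (hY : Y ∈ A) (hwY : w ∈ Y) : u ∈ Y := by
  rcases inAllBut_or_inOnly hw with ⟨t, ht⟩ | ⟨s, hs⟩
  · by_cases haY : a ∈ Y
    · exact hc.mem_of_mem_core_of_mem hu hY haY
    · rcases hc.eq_X_of_inAllBut ht hY hwY haY with rfl | rfl <;> exact core_subset _ hu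
  · have huX := core_subset (X := X) (s + 1) hu
    exact hc.free.mem_of_mem_of_three (ne_of_mem_of_not_mem huX hs.notMem_add_one)
      (hc.mem (s + 1)) (hc.mem (s + 2)) (hc.insert_mem (s + 1))
      (hc.injective.ne (fin3_add_one_ne_add_two s)) (hc.X_ne_insert _ _) (hc.X_ne_insert _ _)
      ⟨huX, hs.notMem_add_one⟩ ⟨core_subset _ hu, hs.notMem_add_two⟩
      ⟨mem_insert_of_mem huX, notMem_insert_of_ne (hc.ne_of_mem hs.mem) hs.notMem_add_one⟩
      hY hwY

theorem core_subset_of_mem_frame (hc : ThreePairs A a X) {x : α} (hx : x ∈ frame a X)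
    (hY : Y ∈ A) (hxY : x ∈ Y) : core X ⊆ Y := fun _ hu => by
  rcases mem_insert.1 hx with rfl | hx
  · exact hc.mem_of_mem_core_of_mem hu hY hxY
  · exact hc.mem_of_mem_core_of_mem_spread hu hx hY hxY

theorem frame_subset_of_mem (hc : ThreePairs A a X) (hu : ∀ i, u ∉ X i) (hua : u ≠ a)
    (hY : Y ∈ A) (huY : u ∈ Y) : frame a X ⊆ Y := by
  have haY : a ∈ Y := hc.free.mem_of_mem_of_three hua.symm (hc.insert_mem 0) (hc.insert_mem 1)
    (hc.insert_mem 2) (hc.insert_ne_insert (by decide)) (hc.insert_ne_insert (by decide))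
    (hc.insert_ne_insert (by decide)) ⟨mem_insert_self a _, notMem_insert_of_ne hua (hu 0)⟩
    ⟨mem_insert_self a _, notMem_insert_of_ne hua (hu 1)⟩
    ⟨mem_insert_self a _, notMem_insert_of_ne hua (hu 2)⟩ hY huY
  refine insert_subset haY fun x hx => ?_
  rcases inAllBut_or_inOnly hx with ⟨t, ht⟩ | ⟨s, hs⟩
  · exact hc.free.mem_of_mem_of_three (ne_of_mem_of_not_mem ht.mem_add_one (hu _))
      (hc.mem (t + 1)) (hc.mem (t + 2)) (hc.insert_mem (t + 1))
      (hc.injective.ne (fin3_add_one_ne_add_two t)) (hc.X_ne_insert _ _) (hc.X_ne_insert _ _)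
      ⟨ht.mem_add_one, hu _⟩ ⟨ht.mem_add_two, hu _⟩
      ⟨mem_insert_of_mem ht.mem_add_one, notMem_insert_of_ne hua (hu _)⟩ hY huY
  · by_contra hxY
    rcases hc.eq_insert_X_of_inOnly hs hY haY hxY with rfl | rfl <;>
      exact notMem_insert_of_ne hua (hu _) huY

theorem sdiff_frame_eq_core (hc : ThreePairs A a X) (hY : Y ∈ A) (hY' : Y' ∈ A) (hne : Y ≠ Y')
    (heq : Y \ frame a X = Y' \ frame a X) : Y \ frame a X = core X := by
  have hsplit : ∀ Z Z' : Finset α, Z \ frame a X = Z' \ frame a X →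
      Z ∩ frame a X = Z' ∩ frame a X → Z = Z' := fun Z Z' h h' => by
    rw [← sdiff_union_inter Z (frame a X), ← sdiff_union_inter Z' (frame a X), h, h']
  refine Subset.antisymm (fun u hu => ?_) (subset_sdiff.2 ⟨?_, hc.disjoint_core_frame⟩)
  · obtain ⟨huY, huf⟩ := mem_sdiff.1 hu
    by_contra huc
    have hux : ∀ i, u ∉ X i := fun i hi => (mem_union.1 (subset_core_union_spread i hi)).elim
      huc fun h => huf (mem_insert_of_mem h)
    have hua : u ≠ a := by
      rintro rfl
      exact huf (mem_insert_self _ _)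
    have huY' : u ∈ Y' := (mem_sdiff.1 (heq ▸ hu)).1
    exact hne (hsplit _ _ heq (by rw [inter_eq_right.2 (hc.frame_subset_of_mem hux hua hY huY),
      inter_eq_right.2 (hc.frame_subset_of_mem hux hua hY' huY')]))
  · have hmiss : ∀ {Z}, Z ∈ A → ¬ core X ⊆ Z → Z ∩ frame a X = ∅ := fun hZ hLZ =>
      eq_empty_of_forall_notMem fun x hx =>
        hLZ (hc.core_subset_of_mem_frame (mem_inter.1 hx).2 hZ (mem_inter.1 hx).1)
    by_contra hLY
    have hLY' : ¬ core X ⊆ Y' := fun h => hLY fun u hu => (mem_sdiff.1 (heq ▸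
      mem_sdiff.2 ⟨h hu, disjoint_left.1 hc.disjoint_core_frame hu⟩ : u ∈ Y \ frame a X)).1
    exact hne (hsplit _ _ heq (by rw [hmiss hY hLY, hmiss hY' hLY']))

theorem card_add_one_le (hc : ThreePairs A a X) :
    #A + 1 ≤ #(A.image (· \ frame a X)) + #(A.filter (· \ frame a X = core X)) := by
  set Φ := A.filter (· \ frame a X = core X)
  have hX : X 0 ∈ Φ := mem_filter.2 ⟨hc.mem 0, hc.X_sdiff_frame 0⟩
  have hinj : Set.InjOn (· \ frame a X) (A \ Φ.erase (X 0) : Finset (Finset α)) := by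
    intro Y hY Y' hY' h
    simp only [coe_sdiff, Set.mem_sdiff, mem_coe, mem_erase, not_and', not_not] at hY hY'
    simp only at h
    by_contra hne
    have hYc := hc.sdiff_frame_eq_core hY.1 hY'.1 hne h
    exact hne ((hY.2 (mem_filter.2 ⟨hY.1, hYc⟩)).trans
      (hY'.2 (mem_filter.2 ⟨hY'.1, h ▸ hYc⟩)).symm)
  have := card_le_card_image_add_of_injOn _ hinj
  rw [card_erase_of_mem hX] at this
  have := card_pos.2 ⟨_, hX⟩
  omega

end ThreePairs

def knownCols (a : α) (X : Fin 3 → Finset α) : Finset (Finset α) :=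
  insert (core X) (insert (core X ∪ frame a X) (univ.image X ∪ univ.image fun i => insert a (X i)))

section KnownCols

variable {a : α} {X : Fin 3 → Finset α} {Y : Finset α}

theorem card_knownCols_le (a : α) (X : Fin 3 → Finset α) : #(knownCols a X) ≤ 8 :=
  calc #(knownCols a X) ≤ #(univ.image X ∪ univ.image fun i => insert a (X i)) + 1 + 1 :=
        (card_insert_le _ _).trans (Nat.add_le_add_right (card_insert_le _ _) 1)
    _ ≤ #(univ : Finset (Fin 3)) + #(univ : Finset (Fin 3)) + 1 + 1 := by
        gcongr; exact (card_union_le _ _).trans (add_le_add card_image_le card_image_le)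
    _ = 8 := rfl

theorem card_knownCols_le_seven {i : Fin 3} (h : X i = core X) : #(knownCols a X) ≤ 7 := by
  have hmem : core X ∈ insert (core X ∪ frame a X)
      (univ.image X ∪ univ.image fun i => insert a (X i)) :=
    mem_insert_of_mem (mem_union_left _ (mem_image.2 ⟨i, mem_univ i, h⟩))
  calc #(knownCols a X) ≤ #(univ.image X ∪ univ.image fun i => insert a (X i)) + 1 := by
        rw [knownCols, insert_eq_of_mem hmem]; exact card_insert_le _ _
    _ ≤ #(univ : Finset (Fin 3)) + #(univ : Finset (Fin 3)) + 1 := by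
        gcongr; exact (card_union_le _ _).trans (add_le_add card_image_le card_image_le)
    _ = 7 := rfl

theorem ne_X_of_notMem_knownCols (h : Y ∉ knownCols a X) (i : Fin 3) : Y ≠ X i := by
  rintro rfl
  exact h (mem_insert_of_mem (mem_insert_of_mem
    (mem_union_left _ (mem_image_of_mem X (mem_univ i)))))

theorem ne_insert_X_of_notMem_knownCols (h : Y ∉ knownCols a X) (i : Fin 3) :
    Y ≠ insert a (X i) := by
  rintro rfl
  exact h (mem_insert_of_mem (mem_insert_of_mem (mem_union_right _
    (mem_image_of_mem (fun i => insert a (X i)) (mem_univ i)))))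

end KnownCols

namespace ThreePairs

variable {A : Finset (Finset α)} {a w : α} {X : Fin 3 → Finset α} {s t : Fin 3}
  {Y Y' : Finset α}

theorem exists_separating (hc : ThreePairs A a X) (hA : ∀ Y ∈ A, Y \ frame a X = core X)
    (hY : Y ∈ A) (hYk : Y ∉ knownCols a X) : ∃ w ∈ spread X, (a ∈ Y ↔ w ∉ Y) := by
  have hdecomp : Y = core X ∪ Y ∩ frame a X := by rw [← hA Y hY, sdiff_union_inter]
  by_cases haY : a ∈ Y
  · obtain ⟨w, hw, hwY⟩ := not_subset.1 fun hsY : spread X ⊆ Y => hYk (by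
      have hfY : frame a X ⊆ Y := insert_subset haY hsY
      rw [hdecomp, inter_eq_right.2 hfY]
      exact mem_insert_of_mem (mem_insert_self _ _))
    exact ⟨w, hw, iff_of_true haY hwY⟩
  · by_contra hsY
    refine hYk ?_
    have hYf : Y ∩ frame a X = ∅ := eq_empty_of_forall_notMem fun x hx => by
      obtain ⟨hxY, hxf⟩ := mem_inter.1 hx
      rcases mem_insert.1 hxf with rfl | hxs
      · exact haY hxY
      · exact hsY ⟨x, hxs, iff_of_false haY (not_not.2 hxY)⟩
    rw [hdecomp, hYf, union_empty]
    exact mem_insert_self _ _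

theorem mem_notMem_of_inAllBut (hc : ThreePairs A a X) (hw : InAllBut X w t) (hY : Y ∈ A)
    (hYk : Y ∉ knownCols a X) (hsep : a ∈ Y ↔ w ∉ Y) : a ∈ Y ∧ w ∉ Y := by
  by_contra h
  have haY : a ∉ Y := fun haY => h ⟨haY, hsep.1 haY⟩
  rcases hc.eq_X_of_inAllBut hw hY (not_not.1 (mt hsep.2 haY)) haY with rfl | rfl
  · exact ne_X_of_notMem_knownCols hYk _ rfl
  · exact ne_X_of_notMem_knownCols hYk _ rfl

theorem notMem_mem_of_inOnly (hc : ThreePairs A a X) (hw : InOnly X w s) (hY : Y ∈ A)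
    (hYk : Y ∉ knownCols a X) (hsep : a ∈ Y ↔ w ∉ Y) : a ∉ Y ∧ w ∈ Y := by
  by_contra h
  have haY : a ∈ Y := not_not.1 fun haY => h ⟨haY, not_not.1 (mt hsep.2 haY)⟩
  rcases hc.eq_insert_X_of_inOnly hw hY haY (hsep.1 haY) with rfl | rfl
  · exact ne_insert_X_of_notMem_knownCols hYk _ rfl
  · exact ne_insert_X_of_notMem_knownCols hYk _ rfl

theorem eq_of_separating (hc : ThreePairs A a X) (hw : w ∈ spread X) (hY : Y ∈ A)
    (hY' : Y' ∈ A) (hYk : Y ∉ knownCols a X) (hY'k : Y' ∉ knownCols a X)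
    (hsep : a ∈ Y ↔ w ∉ Y) (hsep' : a ∈ Y' ↔ w ∉ Y') : Y = Y' := by
  rcases inAllBut_or_inOnly hw with ⟨t, ht⟩ | ⟨s, hs⟩
  · obtain ⟨haY, hwY⟩ := hc.mem_notMem_of_inAllBut ht hY hYk hsep
    obtain ⟨haY', hwY'⟩ := hc.mem_notMem_of_inAllBut ht hY' hY'k hsep'
    exact hc.eq_of_inAllBut_of_notMem ht hY hY' haY haY' hwY hwY'
      (ne_insert_X_of_notMem_knownCols hYk t) (ne_insert_X_of_notMem_knownCols hY'k t)
  · obtain ⟨haY, hwY⟩ := hc.notMem_mem_of_inOnly hs hY hYk hsep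
    obtain ⟨haY', hwY'⟩ := hc.notMem_mem_of_inOnly hs hY' hY'k hsep'
    exact hc.eq_of_inOnly_of_mem hs hY hY' haY haY' hwY hwY'
      (ne_X_of_notMem_knownCols hYk s) (ne_X_of_notMem_knownCols hY'k s)

theorem exists_charge (hc : ThreePairs A a X) (hA : ∀ Y ∈ A, Y \ frame a X = core X) :
    ∃ f : Finset α → α, Set.MapsTo f (A \ knownCols a X : Finset _) (spread X) ∧
      Set.InjOn f (A \ knownCols a X : Finset _) ∧
      ∀ Y ∈ A \ knownCols a X, (a ∈ Y ↔ f Y ∉ Y) := by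
  have : Nonempty α := ⟨a⟩
  choose! f hfs hsep using fun Y (hY : Y ∈ A \ knownCols a X) =>
    hc.exists_separating hA (mem_sdiff.1 hY).1 (mem_sdiff.1 hY).2
  refine ⟨f, fun Y hY => hfs Y hY, fun Y hY Y' hY' h => ?_, hsep⟩
  rw [mem_coe, mem_sdiff] at hY hY'
  exact hc.eq_of_separating (hfs Y (mem_sdiff.2 hY)) hY.1 hY'.1 hY.2 hY'.2
    (hsep Y (mem_sdiff.2 hY)) (h ▸ hsep Y' (mem_sdiff.2 hY'))

theorem card_sdiff_knownCols_le (hc : ThreePairs A a X) (hA : ∀ Y ∈ A, Y \ frame a X = core X) :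
    #(A \ knownCols a X) ≤ #(spread X) :=
  let ⟨f, hmaps, hinj, _⟩ := hc.exists_charge hA
  card_le_card_of_injOn f hmaps hinj

theorem exists_X_eq_core (hc : ThreePairs A a X) (hA : ∀ Y ∈ A, Y \ frame a X = core X)
    (hcard : #(spread X) ≤ #(A \ knownCols a X)) : ∃ i, X i = core X := by
  obtain ⟨f, hmaps, hinj, hsep⟩ := hc.exists_charge hA
  have hsurj : ∀ w ∈ spread X, ∃ Y, (Y ∈ A ∧ Y ∉ knownCols a X) ∧ f Y = w := fun w hw => by
    obtain ⟨Y, hY, rfl⟩ := surjOn_of_injOn_of_card_le f hmaps hinj hcard hw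
    exact ⟨Y, mem_sdiff.1 hY, rfl⟩
  have hMM : ∀ w ∈ spread X, ∀ w' ∈ spread X, ∀ t t', InAllBut X w t → InAllBut X w' t' →
      t = t' := by
    intro w hw w' hw' t t' ht ht'
    obtain ⟨Y, hY, rfl⟩ := hsurj w hw
    obtain ⟨Y', hY', rfl⟩ := hsurj w' hw'
    by_cases hYY : Y = Y'
    · subst hYY
      exact ht.unique ht'
    obtain ⟨haY, hwY⟩ := hc.mem_notMem_of_inAllBut ht hY.1 hY.2 (hsep Y (mem_sdiff.2 hY))
    obtain ⟨haY', hwY'⟩ := hc.mem_notMem_of_inAllBut ht' hY'.1 hY'.2 (hsep Y' (mem_sdiff.2 hY'))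
    exact hc.eq_of_inAllBut_of_inAllBut ht ht' hY.1 hY'.1 (ne_insert_X_of_notMem_knownCols hY.2)
      (ne_insert_X_of_notMem_knownCols hY'.2) haY haY' hwY hwY' hYY
  have hPP : ∀ w ∈ spread X, ∀ w' ∈ spread X, ∀ s s', InOnly X w s → InOnly X w' s' →
      s = s' := by
    intro w hw w' hw' s s' hs hs'
    obtain ⟨Y, hY, rfl⟩ := hsurj w hw
    obtain ⟨Y', hY', rfl⟩ := hsurj w' hw'
    by_cases hYY : Y = Y'
    · subst hYY
      exact hs.unique hs'
    obtain ⟨haY, hwY⟩ := hc.notMem_mem_of_inOnly hs hY.1 hY.2 (hsep Y (mem_sdiff.2 hY))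
    obtain ⟨haY', hwY'⟩ := hc.notMem_mem_of_inOnly hs' hY'.1 hY'.2 (hsep Y' (mem_sdiff.2 hY'))
    exact hc.eq_of_inOnly_of_inOnly hs hs' hY.1 hY'.1 (ne_X_of_notMem_knownCols hY.2)
      (ne_X_of_notMem_knownCols hY'.2) haY haY' hwY hwY' hYY
  obtain ⟨i, hi⟩ := exists_forall_notMem_of_types (fun w hw => inAllBut_or_inOnly hw) hMM hPP
    fun w _ w' _ t s ht hs => hc.ne_of_inAllBut_of_inOnly ht hs
  exact ⟨i, X_eq_core_of_forall_notMem hi⟩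

theorem card_le_of_forall_sdiff_eq (hc : ThreePairs A a X)
    (hA : ∀ Y ∈ A, Y \ frame a X = core X) : #A ≤ 7 * #(frame a X) / 3 + 1 := by
  have hframe : #(frame a X) = #(spread X) + 1 := card_insert_of_notMem hc.notMem_spread
  have hpow : #A ≤ 2 ^ #(frame a X) := by
    rw [← card_powerset]
    refine card_le_card_of_injOn (· ∩ frame a X) (fun Y _ => mem_powerset.2 inter_subset_right)
      fun Y hY Y' hY' h => ?_
    rw [← sdiff_union_inter Y (frame a X), ← sdiff_union_inter Y' (frame a X), hA Y hY,
      hA Y' hY']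
    exact congrArg _ h
  have hsplit : #A ≤ #(A \ knownCols a X) + #(knownCols a X) := card_le_card_sdiff_add_card
  have hextra := hc.card_sdiff_knownCols_le hA
  have h8 := card_knownCols_le a X
  have h7 : #(spread X) ≤ #(A \ knownCols a X) → #(knownCols a X) ≤ 7 := fun h =>
    let ⟨_, hi⟩ := hc.exists_X_eq_core hA h
    card_knownCols_le_seven hi
  obtain ⟨r, hr⟩ : ∃ r, #(frame a X) = r := ⟨_, rfl⟩
  rw [hr] at hframe hpow ⊢
  rcases le_or_gt r 3 with hr3 | hr3
  · interval_cases r <;> simp only [Nat.reducePow] at hpow <;> omega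
  · omega

end ThreePairs

theorem card_le_card_image_sdiff_singleton_add (A : Finset (Finset α)) (a : α) :
    #A ≤ #(A.image (· \ {a})) + #(A.filter fun X => a ∉ X ∧ insert a X ∈ A) := by
  set D := A.filter fun X => a ∉ X ∧ insert a X ∈ A
  have hmixed : ∀ Y ∈ A, ∀ Y' ∈ A, Y' ∉ D.image (insert a) → a ∉ Y → a ∈ Y' →
      Y.erase a ≠ Y'.erase a := by
    intro Y hY Y' hY'A hY' haY haY' h
    rw [erase_eq_of_notMem haY] at h
    have hY'eq : insert a Y = Y' := by rw [h, insert_erase haY']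
    exact hY' (mem_image.2 ⟨Y, mem_filter.2 ⟨hY, haY, hY'eq ▸ hY'A⟩, hY'eq⟩)
  refine (card_le_card_image_add_of_injOn (t := D.image (insert a)) (· \ {a}) ?_).trans
    (Nat.add_le_add_left card_image_le _)
  intro Y hY Y' hY' h
  simp only [coe_sdiff, Set.mem_sdiff, mem_coe, sdiff_singleton_eq_erase] at hY hY' h
  by_cases haY : a ∈ Y <;> by_cases haY' : a ∈ Y'
  · rw [← insert_erase haY, h, insert_erase haY']
  · exact absurd h.symm (hmixed Y' hY'.1 Y hY.1 hY.2 haY' haY)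
  · exact absurd h (hmixed Y hY.1 Y' hY'.1 hY'.2 haY haY')
  · rwa [erase_eq_of_notMem haY, erase_eq_of_notMem haY'] at h

theorem F010Free.card_le {A : Finset (Finset α)} (R : Finset α) (hA : F010Free 3 A)
    (hR : ∀ Y ∈ A, Y ⊆ R) : #A ≤ 7 * #R / 3 + 1 := by
  induction R using Finset.strongInduction generalizing A with
  | H R ih =>
  rcases R.eq_empty_or_nonempty with rfl | ⟨a, ha⟩
  · simpa using card_le_card fun Y hY => mem_powerset.2 (hR Y hY)
  by_cases hD : #(A.filter fun X => a ∉ X ∧ insert a X ∈ A) ≤ 2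
  · have h₁ := card_le_card_image_sdiff_singleton_add A a
    have h₂ := ih (R.erase a) (erase_ssubset ha) (hA.image_sdiff {a}) fun Y hY => by
      obtain ⟨Z, hZ, rfl⟩ := mem_image.1 hY
      rw [sdiff_singleton_eq_erase]
      exact erase_subset_erase a (hR Z hZ)
    have := card_erase_of_mem ha
    have := card_pos.2 ⟨a, ha⟩
    omega
  · obtain ⟨X, hc⟩ := hA.exists_threePairs (not_le.1 hD)
    have hfR : frame a X ⊆ R := insert_subset ha (spread_subset fun i => hR _ (hc.mem i))
    have h₁ := hc.card_add_one_le
    have h₂ := hc.filter_sdiff_frame.card_le_of_forall_sdiff_eq fun Y hY => (mem_filter.1 hY).2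
    have h₃ := ih (R \ frame a X) (sdiff_ssubset hfR ⟨a, mem_insert_self _ _⟩)
      (hA.image_sdiff _) fun Y hY => by
        obtain ⟨Z, hZ, rfl⟩ := mem_image.1 hY
        exact sdiff_subset_sdiff (hR Z hZ) subset_rfl
    rw [card_sdiff_of_subset hfR] at h₃
    have := card_le_card hfR
    omega

end UpperBound

-- Blocks of three consecutive rows, the last one also taking the `m % 3` leftover rows.
def finBlock (m : ℕ) (x : Fin m) : ℕ := min (x / 3) (m / 3 - 1)

theorem three_le_card_block_finBlock {m t : ℕ} (ht : t < m / 3) :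
    3 ≤ #(block (finBlock m) t) := by
  have hmaps : Set.MapsTo (fun c : Fin 3 => (⟨3 * t + c, by omega⟩ : Fin m)) (univ : Finset (Fin 3))
      (block (finBlock m) t) :=
    fun c _ => mem_block.2 (by simp only [finBlock]; omega)
  simpa using card_le_card_of_injOn _ hmaps fun c _ c' _ h => Fin.ext (by simpa using h)

theorem exists_avoidsF010_card_eq {m : ℕ} (hm : 3 ≤ m) :
    ∃ A : Finset (Finset (Fin m)), AvoidsF010 3 m A ∧ #A = 7 * m / 3 + 1 := by
  refine ⟨staircase (finBlock m) (m / 3),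
    avoidsF010_iff.2 (staircase_free _ _), ?_⟩
  rw [card_staircase (fun x => by simp only [finBlock]; omega)
    fun t ht => three_le_card_block_finBlock ht, Fintype.card_fin]
  omega

theorem card_le_of_avoidsF010 {m : ℕ} {A : Finset (Finset (Fin m))} (hA : AvoidsF010 3 m A) :
    #A ≤ 7 * m / 3 + 1 := by
  simpa using (avoidsF010_iff.1 hA).card_le univ fun Y _ => subset_univ Y

theorem forb_F0310 (m : ℕ) (hm : 3 ≤ m) : forb m 3 = 7 * m / 3 + 1 := by
  obtain ⟨A, hA, hcard⟩ := exists_avoidsF010_card_eq hm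
  exact IsGreatest.csSup_eq ⟨⟨A, hA, hcard⟩, fun n ⟨B, hB, hn⟩ => hn ▸ card_le_of_avoidsF010 hB⟩
end

section
/- (Upper Bound Lemma, part 1) Let k ≥ 1, n ≥ 0 and t ≥ 0 be integers, and let B be a k × n (0,1)-matrix (columns need not be distinct) such that no column of B is all ones, no column of B is all zeros, and for every pair of distinct rows i, j the number of columns c with B(i,c) ≠ B(j,c) is at most t. Then 2n ≤ tk. -/
/-!
Double count the triples (i, j, c) with B i c ≠ B j c over ordered pairs of rows i, j. A column
whose entries are not all equal, with a rows taking one of its values and the other b = k - a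
rows not, contributes at least 2ab ≥ 2(k - 1) pairs; each of the k(k - 1) ordered pairs of distinct
rows contributes at most t columns. So 2n(k - 1) ≤ k(k - 1)t, and k ≥ 2 as soon as n ≥ 1.
-/

open Finset

section

variable {ι α β : Type*} [Fintype ι] [Fintype α] [DecidableEq β]

theorem two_mul_card_sub_one_le_card_ne (f : ι → β) {i j : ι} (hij : f i ≠ f j) :
    2 * (Fintype.card ι - 1) ≤ #{p : ι × ι | f p.1 ≠ f p.2} := by
  set S : Finset ι := {l | f l = f i}
  set T : Finset ι := {l | f l ≠ f i}
  have hS : 1 ≤ #S := card_pos.mpr ⟨i, by simp [S]⟩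
  have hT : 1 ≤ #T := card_pos.mpr ⟨j, by simp [T, Ne.symm hij]⟩
  have hsum : #S + #T = Fintype.card ι := card_filter_add_card_filter_not _
  have hdisj : Disjoint (S ×ˢ T) (T ×ˢ S) :=
    disjoint_product.mpr (Or.inl (disjoint_filter_filter_not _ _ _))
  have hsub : (S ×ˢ T).disjUnion (T ×ˢ S) hdisj ⊆ ({p | f p.1 ≠ f p.2} : Finset (ι × ι)) := by
    rintro ⟨x, y⟩ hxy
    simp only [S, T, mem_disjUnion, mem_product, mem_filter, mem_univ, true_and] at hxy ⊢
    grind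
  calc 2 * (Fintype.card ι - 1) ≤ #S * #T + #T * #S := by
        rw [← hsum]
        obtain ⟨a, ha⟩ := Nat.exists_eq_add_of_le hS
        obtain ⟨b, hb⟩ := Nat.exists_eq_add_of_le hT
        rw [ha, hb]
        ring_nf
        omega
    _ = #((S ×ˢ T).disjUnion (T ×ˢ S) hdisj) := by rw [card_disjUnion, card_product, card_product]
    _ ≤ _ := card_le_card hsub

theorem sum_card_ne_le [DecidableEq ι] (B : ι → α → β) {t : ℕ}
    (h : ∀ i j, i ≠ j → #{c | B i c ≠ B j c} ≤ t) :
    ∑ c, #{p : ι × ι | B p.1 c ≠ B p.2 c} ≤ Fintype.card ι * (Fintype.card ι - 1) * t := by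
  calc ∑ c, #{p : ι × ι | B p.1 c ≠ B p.2 c}
      = ∑ p : ι × ι, #{c | B p.1 c ≠ B p.2 c} := by
        simp only [card_filter]
        exact sum_comm
    _ = ∑ p ∈ (univ : Finset ι).offDiag, #{c | B p.1 c ≠ B p.2 c} := by
        refine (sum_subset (subset_univ _) ?_).symm
        rintro ⟨i, j⟩ - hp
        simp_all
    _ ≤ ∑ _p ∈ (univ : Finset ι).offDiag, t :=
        sum_le_sum fun p hp => h p.1 p.2 (mem_offDiag.mp hp).2.2
    _ = Fintype.card ι * (Fintype.card ι - 1) * t := by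
        rw [sum_const, smul_eq_mul, offDiag_card, card_univ, Nat.mul_sub_one]

theorem two_mul_card_le_of_card_ne_le (B : ι → α → β) {t : ℕ}
    (hB : ∀ c, ∃ i j, B i c ≠ B j c) (h : ∀ i j, i ≠ j → #{c | B i c ≠ B j c} ≤ t) :
    2 * Fintype.card α ≤ t * Fintype.card ι := by
  classical
  rcases isEmpty_or_nonempty α with _ | ⟨⟨c⟩⟩
  · simp
  obtain ⟨i, j, hij⟩ := hB c
  have hk : 2 ≤ Fintype.card ι :=
    Fintype.one_lt_card_iff.mpr ⟨i, j, fun h => hij (h ▸ rfl)⟩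
  have hcount : Fintype.card α * (2 * (Fintype.card ι - 1)) ≤
      Fintype.card ι * (Fintype.card ι - 1) * t := by
    calc Fintype.card α * (2 * (Fintype.card ι - 1))
        = ∑ _c : α, 2 * (Fintype.card ι - 1) := by simp
      _ ≤ ∑ c, #{p : ι × ι | B p.1 c ≠ B p.2 c} := sum_le_sum fun c _ =>
          let ⟨_, _, hc⟩ := hB c
          two_mul_card_sub_one_le_card_ne (B · c) hc
      _ ≤ _ := sum_card_ne_le B h
  refine Nat.le_of_mul_le_mul_right (c := Fintype.card ι - 1) ?_ (by omega)
  calc 2 * Fintype.card α * (Fintype.card ι - 1)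
      = Fintype.card α * (2 * (Fintype.card ι - 1)) := by ring
    _ ≤ _ := hcount
    _ = _ := by ring

end

theorem upper_bound_lemma_part1_general (k n t : ℕ)
    (B : Fin k → Fin n → Fin 2)
    (h_no_ones : ∀ c : Fin n, ¬ (∀ i : Fin k, B i c = 1))
    (h_no_zeros : ∀ c : Fin n, ¬ (∀ i : Fin k, B i c = 0))
    (h_diff : ∀ i j : Fin k, i ≠ j →
      (Finset.univ.filter fun c : Fin n => B i c ≠ B j c).card ≤ t) :
    2 * n ≤ t * k := by
  have hB : ∀ c, ∃ i j, B i c ≠ B j c := fun c => by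
    obtain ⟨i, hi⟩ := not_forall.mp (h_no_ones c)
    obtain ⟨j, hj⟩ := not_forall.mp (h_no_zeros c)
    exact ⟨i, j, by omega⟩
  simpa using two_mul_card_le_of_card_ne_le B hB h_diff

theorem upper_bound_lemma_part1 (k n t : ℕ) (hk : 1 ≤ k)
    (B : Fin k → Fin n → Fin 2)
    (h_no_ones : ∀ c : Fin n, ¬ (∀ i : Fin k, B i c = 1))
    (h_no_zeros : ∀ c : Fin n, ¬ (∀ i : Fin k, B i c = 0))
    (h_diff : ∀ i j : Fin k, i ≠ j →
      (Finset.univ.filter fun c : Fin n => B i c ≠ B j c).card ≤ t) :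
    2 * n ≤ t * k :=
  upper_bound_lemma_part1_general k n t B h_no_ones h_no_zeros h_diff
end

section
/- (Upper Bound Lemma, part 2) Let k ≥ 3, n ≥ 0 and t ≥ 4 be integers, and let B be a k × n (0,1)-matrix with pairwise distinct columns such that no column of B is all ones, no column of B is all zeros, and for every pair of distinct rows i, j the number of columns c with B(i,c) ≠ B(j,c) is at most t. Then n ≤ 2k + (t − 4)·k·(k − 1) / (4·(k − 2)); in particular, since n is an integer, n ≤ ⌊2k + (t − 4)k(k − 1)/(4(k − 2))⌋. -/
open Finset

/-!
Count the ordered pairs of rows that differ in a column. A column with `w` ones contributes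
`2 w (k - w)`, and by the hypothesis on rows the total is at most `k (k - 1) t`. A non-constant
column contributes at least `2 (k - 1)`; since the columns are distinct, at most `2 k` of them have
a single one or a single zero, and every other column has `w, k - w ≥ 2`, so contributes at least
`4 (k - 2)`. Solving the resulting linear inequality for `n` gives the bound.
-/

lemma Fin.two_eq_of_eq_iff_eq {x y a : Fin 2} (h : x = a ↔ y = a) : x = y := by
  revert x y a; decide

section Column

variable {ι : Type*} [Fintype ι] (f : ι → Fin 2)

lemma card_filter_eq_zero_add_card_filter_eq_one :
    #{i | f i = 0} + #{i | f i = 1} = Fintype.card ι := by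
  rw [← card_univ, ← card_filter_add_card_filter_not (s := univ) (p := fun i => f i = 0)]
  congr 2
  ext i
  simp only [mem_filter, mem_univ, true_and]
  generalize f i = x
  revert x; decide

variable {f} in
lemma card_filter_eq_pos_of_not_forall_eq {a b : Fin 2} (hab : a ≠ b) (h : ¬ ∀ i, f i = b) :
    0 < #{i | f i = a} := by
  obtain ⟨i, hi⟩ := not_forall.mp h
  exact card_pos.mpr ⟨i, by simp only [mem_filter, mem_univ, true_and]; omega⟩

variable [DecidableEq ι]

lemma card_filter_pairs_ne :
    #{p : ι × ι | f p.1 ≠ f p.2} = 2 * (#{i | f i = 0} * #{i | f i = 1}) := by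
  set s₀ : Finset ι := {i | f i = 0}
  set s₁ : Finset ι := {i | f i = 1}
  have hsplit : ({p : ι × ι | f p.1 ≠ f p.2} : Finset (ι × ι)) = s₀ ×ˢ s₁ ∪ s₁ ×ˢ s₀ := by
    ext ⟨i, j⟩
    simp only [s₀, s₁, mem_filter, mem_univ, true_and, mem_union, mem_product]
    generalize f i = x; generalize f j = y
    revert x y; decide
  have hdisj : Disjoint (s₀ ×ˢ s₁) (s₁ ×ˢ s₀) :=
    disjoint_product.mpr (.inl (disjoint_filter.mpr fun _ _ h => h ▸ zero_ne_one))
  rw [hsplit, card_union_of_disjoint hdisj, card_product, card_product, mul_comm #s₁]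
  ring

variable {f}

lemma two_mul_card_sub_one_le_card_filter_pairs_ne (h₀ : ¬ ∀ i, f i = 0) (h₁ : ¬ ∀ i, f i = 1) :
    2 * (Fintype.card ι - 1) ≤ #{p : ι × ι | f p.1 ≠ f p.2} := by
  rw [card_filter_pairs_ne, ← card_filter_eq_zero_add_card_filter_eq_one f]
  exact Nat.mul_le_mul_left 2 <| Nat.add_sub_one_le_mul
    (card_filter_eq_pos_of_not_forall_eq zero_ne_one h₁).ne'
    (card_filter_eq_pos_of_not_forall_eq one_ne_zero h₀).ne'

lemma four_mul_card_sub_two_le_card_filter_pairs_ne (h₀ : 2 ≤ #{i | f i = 0})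
    (h₁ : 2 ≤ #{i | f i = 1}) :
    4 * (Fintype.card ι - 2) ≤ #{p : ι × ι | f p.1 ≠ f p.2} := by
  rw [card_filter_pairs_ne, ← card_filter_eq_zero_add_card_filter_eq_one f]
  obtain ⟨a, ha⟩ := Nat.exists_eq_add_of_le h₀
  obtain ⟨b, hb⟩ := Nat.exists_eq_add_of_le h₁
  rw [ha, hb, show 2 + a + (2 + b) - 2 = 2 + a + b by omega]
  nlinarith

end Column

lemma sum_card_filter_pairs_ne_le {ι κ α : Type*} [Fintype ι] [DecidableEq ι] [Fintype κ]
    [DecidableEq α] (B : ι → κ → α) (t : ℕ) (h : ∀ i j, i ≠ j → #{c | B i c ≠ B j c} ≤ t) :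
    ∑ c, #{p : ι × ι | B p.1 c ≠ B p.2 c} ≤ Fintype.card ι * (Fintype.card ι - 1) * t := by
  have hcomm : ∑ c, #{p : ι × ι | B p.1 c ≠ B p.2 c} =
      ∑ p : ι × ι, #{c | B p.1 c ≠ B p.2 c} := by
    simp only [card_filter]
    exact sum_comm
  have hdiag : ∑ p : ι × ι, #{c | B p.1 c ≠ B p.2 c} =
      ∑ p ∈ univ.offDiag, #{c | B p.1 c ≠ B p.2 c} := by
    refine (sum_subset (subset_univ _) fun p _ hp => ?_).symm
    have : p.1 = p.2 := by simpa using hp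
    simp [this]
  calc ∑ c, #{p : ι × ι | B p.1 c ≠ B p.2 c}
      = ∑ p ∈ univ.offDiag, #{c | B p.1 c ≠ B p.2 c} := hcomm.trans hdiag
    _ ≤ #(univ : Finset ι).offDiag • t :=
      sum_le_card_nsmul _ _ _ fun p hp => h p.1 p.2 (by simpa using hp)
    _ = Fintype.card ι * (Fintype.card ι - 1) * t := by
      rw [offDiag_card, card_univ, smul_eq_mul, Nat.mul_sub_one]

lemma card_filter_card_filter_eq_eq_one_le {ι κ : Type*} [Fintype ι] [DecidableEq ι] [Fintype κ]
    (B : ι → κ → Fin 2) (hB : ∀ c d, (∀ i, B i c = B i d) → c = d) (a : Fin 2) :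
    #{c | #{i | B i c = a} = 1} ≤ Fintype.card ι := by
  have hinj : Function.Injective fun c => ({i | B i c = a} : Finset ι) := by
    intro c d hcd
    refine hB c d fun i => Fin.two_eq_of_eq_iff_eq (a := a) ?_
    simpa using congrArg (i ∈ ·) hcd
  calc #{c | #{i | B i c = a} = 1}
      ≤ #(powersetCard 1 (univ : Finset ι)) :=
        card_le_card_of_injOn _ (fun c hc => by simpa [mem_powersetCard] using hc) hinj.injOn
    _ = Fintype.card ι := by simp

lemma cast_add_le_of_mul_add_mul_le {a b k t : ℕ} (hk : 3 ≤ k) (ha : a ≤ 2 * k)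
    (h : a * (2 * (k - 1)) + b * (4 * (k - 2)) ≤ k * (k - 1) * t) :
    ((a + b : ℕ) : ℚ) ≤ 2 * k + ((t : ℚ) - 4) * k * (k - 1) / (4 * (k - 2)) := by
  have hq : (a : ℚ) * (2 * (k - 1)) + b * (4 * (k - 2)) ≤ k * (k - 1) * t := by
    have := (Nat.cast_le (α := ℚ)).mpr h
    push_cast [Nat.cast_sub (by omega : 1 ≤ k), Nat.cast_sub (by omega : 2 ≤ k)] at this
    exact this
  have hkq : (3 : ℚ) ≤ k := by exact_mod_cast hk
  have haq : (a : ℚ) ≤ 2 * k := by exact_mod_cast ha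
  rw [Nat.cast_add, ← sub_le_iff_le_add', le_div_iff₀ (by linarith)]
  nlinarith [mul_le_mul_of_nonneg_left haq (by linarith : (0 : ℚ) ≤ 2 * k - 6)]

theorem upper_bound_lemma_part2_general (k n t : ℕ) (hk : 3 ≤ k)
    (B : Fin k → Fin n → Fin 2)
    (h_simple : ∀ c d : Fin n, (∀ i : Fin k, B i c = B i d) → c = d)
    (h_no_ones : ∀ c : Fin n, ¬ (∀ i : Fin k, B i c = 1))
    (h_no_zeros : ∀ c : Fin n, ¬ (∀ i : Fin k, B i c = 0))
    (h_diff : ∀ i j : Fin k, i ≠ j →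
      (Finset.univ.filter fun c : Fin n => B i c ≠ B j c).card ≤ t) :
    (n : ℚ) ≤ 2 * k + ((t : ℚ) - 4) * k * (k - 1) / (4 * (k - 2)) := by
  set S : Finset (Fin n) := {c | #{i | B i c = 0} = 1 ∨ #{i | B i c = 1} = 1}
  have hS : #S ≤ 2 * k := by
    have h₀ := card_filter_card_filter_eq_eq_one_le B h_simple 0
    have h₁ := card_filter_card_filter_eq_eq_one_le B h_simple 1
    rw [Fintype.card_fin] at h₀ h₁
    rw [show S = _ from filter_or _ _ _, two_mul]
    exact (card_union_le _ _).trans (add_le_add h₀ h₁)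
  have hlow : #S * (2 * (k - 1)) + #Sᶜ * (4 * (k - 2)) ≤
      ∑ c, #{p : Fin k × Fin k | B p.1 c ≠ B p.2 c} := by
    rw [← sum_add_sum_compl S]
    refine add_le_add (card_nsmul_le_sum _ _ _ fun c _ => ?_)
      (card_nsmul_le_sum _ _ _ fun c hc => ?_)
    · simpa using two_mul_card_sub_one_le_card_filter_pairs_ne (h_no_zeros c) (h_no_ones c)
    · have h₀ := card_filter_eq_pos_of_not_forall_eq (f := (B · c)) zero_ne_one (h_no_ones c)
      have h₁ := card_filter_eq_pos_of_not_forall_eq (f := (B · c)) one_ne_zero (h_no_zeros c)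
      simp only [S, mem_compl, mem_filter, mem_univ, true_and, not_or] at hc
      simpa using four_mul_card_sub_two_le_card_filter_pairs_ne (f := (B · c)) (by omega) (by omega)
  have hup := sum_card_filter_pairs_ne_le B t h_diff
  rw [Fintype.card_fin] at hup
  rw [← Fintype.card_fin n, ← card_add_card_compl S]
  exact cast_add_le_of_mul_add_mul_le hk hS (hlow.trans hup)

theorem upper_bound_lemma_part2 (k n t : ℕ) (hk : 3 ≤ k) (ht : 4 ≤ t)
    (B : Fin k → Fin n → Fin 2)
    (h_simple : ∀ c d : Fin n, (∀ i : Fin k, B i c = B i d) → c = d)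
    (h_no_ones : ∀ c : Fin n, ¬ (∀ i : Fin k, B i c = 1))
    (h_no_zeros : ∀ c : Fin n, ¬ (∀ i : Fin k, B i c = 0))
    (h_diff : ∀ i j : Fin k, i ≠ j →
      (Finset.univ.filter fun c : Fin n => B i c ≠ B j c).card ≤ t) :
    (n : ℚ) ≤ 2 * k + ((t : ℚ) - 4) * k * (k - 1) / (4 * (k - 2)) :=
  upper_bound_lemma_part2_general k n t hk B h_simple h_no_ones h_no_zeros h_diff
end

section
/- (Construction Lemma) Let p ≥ 1 and t ≥ 1 be integers, let R_1, …, R_t be pairwise disjoint nonempty finite sets with union M, and for each i with 1 ≤ i ≤ t let B_i be a family of subsets of R_i that avoids F(0,p,1,0) (as a family on ground set R_i) and satisfies R_i ∉ B_i. Define 𝒜 = {M} ∪ ⋃_{i=1}^{t} { (R_1 ∪ ⋯ ∪ R_{i−1}) ∪ S : S ∈ B_i }. Then 𝒜 is a family of subsets of M that avoids F(0,p,1,0), and its members are pairwise distinct, so |𝒜| = 1 + Σ_{i=1}^{t} |B_i|. -/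
open Finset Function

/-- A family `A` of distinct subsets of the ground set `R` avoids the configuration
`F(0,p,1,0)`: every member is a subset of `R`, and for every ordered pair of distinct
`i, j ∈ R`, if some member contains `j` but not `i`, then at most `p - 1` members
contain `i` but not `j`. -/
def AvoidsOn {α : Type*} [DecidableEq α] (p : ℕ) (R : Finset α)
    (A : Finset (Finset α)) : Prop :=
  (∀ X ∈ A, X ⊆ R) ∧
  ∀ i ∈ R, ∀ j ∈ R, i ≠ j →
    (∃ X ∈ A, j ∈ X ∧ i ∉ X) →
    (A.filter fun Y => i ∈ Y ∧ j ∉ Y).card ≤ p - 1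

/-!
Every element `x` of `M` lies in exactly one block `R u`, and it belongs to the member
`(R_1 ∪ ⋯ ∪ R_{a-1}) ∪ S` (with `S ⊆ R a`) iff `u < a`, or `u = a` and `x ∈ S`. Hence a member
containing `i ∈ R u` but not `j ∈ R v` has index `a` with `u ≤ a ≤ v`. If both separations
occur, then `u = v = a`, and the members containing `i` but not `j` are lifts of members of
`B u` doing the same, so the bound for `B u` carries over. Intersecting with `R a` recovers `S`
from its lift, and `R a ∉ B a` rules out coincidences between different indices and with `M`.
-/

section BlockFamily

variable {ι α : Type*} [Fintype ι] [LinearOrder ι] [DecidableEq α]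

def prefixUnion (R : ι → Finset α) (i : ι) : Finset α :=
  (univ.filter fun a => a < i).biUnion R

def blockFamily (R : ι → Finset α) (B : ι → Finset (Finset α)) : Finset (Finset α) :=
  insert (univ.biUnion R) (univ.biUnion fun i => (B i).image fun S => prefixUnion R i ∪ S)

variable {R : ι → Finset α} {B : ι → Finset (Finset α)}

theorem mem_blockFamily {Y : Finset α} :
    Y ∈ blockFamily R B ↔ Y = univ.biUnion R ∨ ∃ a, ∃ S ∈ B a, Y = prefixUnion R a ∪ S := by
  simp only [blockFamily, mem_insert, mem_biUnion, mem_image, mem_univ, true_and, eq_comm]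

theorem prefixUnion_subset_biUnion (a : ι) : prefixUnion R a ⊆ univ.biUnion R :=
  biUnion_subset_biUnion_of_subset_left R (subset_univ _)

theorem subset_prefixUnion {a c : ι} (h : a < c) : R a ⊆ prefixUnion R c :=
  subset_biUnion_of_mem R (mem_filter.2 ⟨mem_univ a, h⟩)

theorem prefixUnion_union_inter_of_lt {a c : ι} (S : Finset α) (h : a < c) :
    (prefixUnion R c ∪ S) ∩ R a = R a :=
  inter_eq_right.2 ((subset_prefixUnion h).trans subset_union_left)

variable (hR : Pairwise (Disjoint on R))
include hR

theorem mem_prefixUnion_iff {x : α} {u : ι} (hx : x ∈ R u) (a : ι) :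
    x ∈ prefixUnion R a ↔ u < a := by
  simp only [prefixUnion, mem_biUnion, mem_filter, mem_univ, true_and]
  exact ⟨fun ⟨b, hb, hxb⟩ => hR.eq (not_disjoint_iff.2 ⟨x, hx, hxb⟩) ▸ hb, fun h => ⟨u, h, hx⟩⟩

theorem mem_prefixUnion_union_iff {x : α} {u a : ι} {S : Finset α} (hx : x ∈ R u)
    (hS : S ⊆ R a) : x ∈ prefixUnion R a ∪ S ↔ u < a ∨ u = a ∧ x ∈ S := by
  rw [mem_union, mem_prefixUnion_iff hR hx]
  exact or_congr_right ⟨fun h => ⟨hR.eq (not_disjoint_iff.2 ⟨x, hx, hS h⟩), h⟩, And.right⟩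

theorem prefixUnion_union_inter_self {a : ι} {S : Finset α} (hS : S ⊆ R a) :
    (prefixUnion R a ∪ S) ∩ R a = S := by
  ext x
  simp only [mem_inter]
  constructor
  · rintro ⟨hxY, hxa⟩
    rw [mem_prefixUnion_union_iff hR hxa hS] at hxY
    simpa using hxY
  · exact fun hx => ⟨mem_union_right _ hx, hS hx⟩

variable (hsub : ∀ i, ∀ S ∈ B i, S ⊆ R i)
include hsub

theorem le_of_separating_mem_blockFamily {Y : Finset α} (hY : Y ∈ blockFamily R B)
    {i j : α} {u v : ι}
    (hi : i ∈ R u) (hj : j ∈ R v) (hiY : i ∈ Y) (hjY : j ∉ Y) :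
    u ≤ v ∧ (u = v → ∃ S ∈ B u, Y = prefixUnion R u ∪ S ∧ i ∈ S ∧ j ∉ S) := by
  rcases mem_blockFamily.1 hY with rfl | ⟨a, S, hS, rfl⟩
  · exact absurd (mem_biUnion.2 ⟨v, mem_univ v, hj⟩) hjY
  rw [mem_prefixUnion_union_iff hR hi (hsub a S hS)] at hiY
  rw [mem_prefixUnion_union_iff hR hj (hsub a S hS), not_or, not_and, not_lt] at hjY
  have hua : u ≤ a := hiY.elim le_of_lt (fun h => h.1.le)
  refine ⟨hua.trans hjY.1, fun huv => ?_⟩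
  obtain rfl : a = u := le_antisymm (huv ▸ hjY.1) hua
  exact ⟨S, hS, rfl, hiY.resolve_left (lt_irrefl a) |>.2, hjY.2 huv.symm⟩

omit hsub in
theorem avoidsOn_blockFamily {p : ℕ} (hBp : ∀ i, AvoidsOn p (R i) (B i)) :
    AvoidsOn p (univ.biUnion R) (blockFamily R B) := by
  have hsub : ∀ i, ∀ S ∈ B i, S ⊆ R i := fun i => (hBp i).1
  refine ⟨fun X hX => ?_, fun i hi j hj hij ⟨X, hX, hjX, hiX⟩ => ?_⟩
  · rcases mem_blockFamily.1 hX with rfl | ⟨a, S, hS, rfl⟩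
    · exact Subset.rfl
    · exact union_subset (prefixUnion_subset_biUnion a)
        ((hsub a S hS).trans (subset_biUnion_of_mem R (mem_univ a)))
  obtain ⟨u, -, hu⟩ := mem_biUnion.1 hi
  obtain ⟨v, -, hv⟩ := mem_biUnion.1 hj
  obtain ⟨hvu, hXlift⟩ := le_of_separating_mem_blockFamily hR hsub hX hv hu hjX hiX
  rcases ((blockFamily R B).filter fun Y => i ∈ Y ∧ j ∉ Y).eq_empty_or_nonempty with h | ⟨Y, hY⟩
  · simp [h]
  rw [mem_filter] at hY
  obtain rfl : u = v :=
    le_antisymm (le_of_separating_mem_blockFamily hR hsub hY.1 hu hv hY.2.1 hY.2.2).1 hvu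
  obtain ⟨T, hT, -, hjT, hiT⟩ := hXlift rfl
  have hlift : ((blockFamily R B).filter fun Y => i ∈ Y ∧ j ∉ Y) ⊆
      ((B u).filter fun S => i ∈ S ∧ j ∉ S).image (prefixUnion R u ∪ ·) := by
    intro Z hZ
    rw [mem_filter] at hZ
    obtain ⟨S, hS, rfl, hiS, hjS⟩ :=
      (le_of_separating_mem_blockFamily hR hsub hZ.1 hu hv hZ.2.1 hZ.2.2).2 rfl
    exact mem_image_of_mem _ (mem_filter.2 ⟨hS, hiS, hjS⟩)
  calc _ ≤ _ := card_le_card hlift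
    _ ≤ _ := card_image_le
    _ ≤ p - 1 := (hBp u).2 i hu j hv hij ⟨T, hT, hjT, hiT⟩

variable (hfull : ∀ i, R i ∉ B i)
include hfull

theorem prefixUnion_union_ne_of_inter_eq {a : ι} {S X : Finset α} (hS : S ∈ B a)
    (hX : X ∩ R a = R a) : prefixUnion R a ∪ S ≠ X := by
  intro h
  rw [← h, prefixUnion_union_inter_self hR (hsub a S hS)] at hX
  exact hfull a (hX ▸ hS)

theorem eq_of_prefixUnion_union_eq {a c : ι} {S W : Finset α} (hS : S ∈ B a) (hW : W ∈ B c)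
    (h : prefixUnion R a ∪ S = prefixUnion R c ∪ W) : a = c ∧ S = W := by
  rcases lt_trichotomy a c with hac | rfl | hca
  · exact absurd h (prefixUnion_union_ne_of_inter_eq hR hsub hfull hS
      (prefixUnion_union_inter_of_lt W hac))
  · refine ⟨rfl, ?_⟩
    have hrestrict := congrArg (· ∩ R a) h
    rwa [prefixUnion_union_inter_self hR (hsub a S hS),
      prefixUnion_union_inter_self hR (hsub a W hW)] at hrestrict
  · exact absurd h.symm (prefixUnion_union_ne_of_inter_eq hR hsub hfull hW
      (prefixUnion_union_inter_of_lt S hca))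

theorem card_blockFamily : (blockFamily R B).card = 1 + ∑ i, (B i).card := by
  rw [blockFamily, card_insert_of_notMem, card_biUnion, add_comm]
  · congr 1
    exact sum_congr rfl fun a _ => card_image_of_injOn fun S hS W hW h =>
      (eq_of_prefixUnion_union_eq hR hsub hfull hS hW h).2
  · intro a _ c _ hac
    refine disjoint_left.2 fun X hXa hXc => hac ?_
    obtain ⟨S, hS, rfl⟩ := mem_image.1 hXa
    obtain ⟨W, hW, hSW⟩ := mem_image.1 hXc
    exact (eq_of_prefixUnion_union_eq hR hsub hfull hS hW hSW.symm).1
  · simp only [mem_biUnion, mem_image, mem_univ, true_and, not_exists, not_and]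
    exact fun a S hS => prefixUnion_union_ne_of_inter_eq hR hsub hfull hS
      (inter_eq_right.2 (subset_biUnion_of_mem R (mem_univ a)))

end BlockFamily

theorem construction_lemma_general {α : Type*} [DecidableEq α] (p t : ℕ)
    (R : Fin t → Finset α)
    (hdisj : ∀ i j, i ≠ j → Disjoint (R i) (R j))
    (B : Fin t → Finset (Finset α))
    (hB : ∀ i, AvoidsOn p (R i) (B i))
    (hnotfull : ∀ i, R i ∉ B i) :
    AvoidsOn p (Finset.univ.biUnion R)
      (insert (Finset.univ.biUnion R)
        (Finset.univ.biUnion fun i =>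
          (B i).image fun S => ((Finset.univ.filter fun a => a < i).biUnion R) ∪ S)) ∧
    (insert (Finset.univ.biUnion R)
        (Finset.univ.biUnion fun i =>
          (B i).image fun S => ((Finset.univ.filter fun a => a < i).biUnion R) ∪ S)).card
      = 1 + ∑ i, (B i).card := by
  exact ⟨avoidsOn_blockFamily hdisj hB, card_blockFamily hdisj (fun i => (hB i).1) hnotfull⟩

theorem construction_lemma {α : Type*} [DecidableEq α] (p t : ℕ) (hp : 1 ≤ p) (ht : 1 ≤ t)
    (R : Fin t → Finset α) (hne : ∀ i, (R i).Nonempty)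
    (hdisj : ∀ i j, i ≠ j → Disjoint (R i) (R j))
    (B : Fin t → Finset (Finset α))
    (hB : ∀ i, AvoidsOn p (R i) (B i))
    (hnotfull : ∀ i, R i ∉ B i) :
    AvoidsOn p (Finset.univ.biUnion R)
      (insert (Finset.univ.biUnion R)
        (Finset.univ.biUnion fun i =>
          (B i).image fun S => ((Finset.univ.filter fun a => a < i).biUnion R) ∪ S)) ∧
    (insert (Finset.univ.biUnion R)
        (Finset.univ.biUnion fun i =>
          (B i).image fun S => ((Finset.univ.filter fun a => a < i).biUnion R) ∪ S)).card
      = 1 + ∑ i, (B i).card :=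
  construction_lemma_general p t R hdisj B hB hnotfull
end

section
/- Let p ∈ {3,4,5,6,7,8,9} and set c_3 = 7/3, c_4 = 11/4, c_5 = 15/4, c_6 = 21/5, c_7 = 24/5, c_8 = 27/5, c_9 = 31/5. Let m ≥ 1 and let 𝒜 be a family of subsets of {1,…,m} that avoids F(0,p,1,0), and suppose that every connected component of the graph G(𝒜) is a clique (i.e., any two vertices in the same connected component are adjacent). Then |𝒜| ≤ c_p·m + 1. -/
open Finset

/-- The graph `G(A)` on the rows: distinct `i, j` are joined by an undirected edge iff
both counts `#{X ∈ A : i ∈ X, j ∉ X}` and `#{X ∈ A : j ∈ X, i ∉ X}` lie in `[1, p-1]`. -/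
def configGraph (p m : ℕ) (A : Finset (Finset (Fin m))) : SimpleGraph (Fin m) where
  Adj i j := i ≠ j ∧
    (1 ≤ (A.filter fun X => i ∈ X ∧ j ∉ X).card ∧
      (A.filter fun X => i ∈ X ∧ j ∉ X).card ≤ p - 1) ∧
    (1 ≤ (A.filter fun X => j ∈ X ∧ i ∉ X).card ∧
      (A.filter fun X => j ∈ X ∧ i ∉ X).card ≤ p - 1)
  symm := by
    refine ⟨?_⟩
    rintro i j ⟨h1, h2, h3⟩
    exact ⟨h1.symm, h3, h2⟩
  loopless := by
    refine ⟨?_⟩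
    rintro i ⟨h1, -⟩
    exact h1 rfl

/-- The constants `c_p` for `3 ≤ p ≤ 9`. -/
def cp (p : ℕ) : ℚ :=
  if p = 3 then 7/3 else if p = 4 then 11/4 else if p = 5 then 15/4
  else if p = 6 then 21/5 else if p = 7 then 24/5 else if p = 8 then 27/5 else 31/5

/-!
Call `b ∈ X` a bottom row of the column `X` when every row of `X` outside the component of `b`
in `G(A)` lies in every column containing `b`. Avoiding `F(0,p,1,0)` makes any two distinct
non-adjacent rows comparable under this implication, so a row of `X` lying in the fewest columns
is a bottom row. When the components are cliques, which rows outside a component are implied by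
`b` depends only on the component of `b`; hence a nonempty column is determined by the component
`C` of one of its bottom rows together with its trace `X ∩ C`.

The traces on `C` are nonempty subsets of `C` in which every ordered pair of points is separated
(`x ∈ S`, `y ∉ S`) at most `p - 1` times. Double counting separations gives
`∑ |S| (|C| - |S|) ≤ (p - 1) |C| (|C| - 1)`, and apart from `C` itself only the at most `2 |C|`
sets of size `1` or `|C| - 1` weigh less than `2 (|C| - 2)`; this bounds the number of traces by
`c_p |C|`, except for `p = 4`, `|C| ∈ {4, 5}`, where one also tracks how the singletons and
co-singletons present use up the separation budget. Summing over the components and adding the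
empty column gives the bound.
-/

lemma sum_le_card_sub_one_mul {α : Type*} [DecidableEq α] {C : Finset α} {f : α → ℕ} {v : α}
    {c : ℕ} (hv : v ∈ C) (h0 : f v = 0) (hf : ∀ y ∈ C, y ≠ v → f y ≤ c) :
    ∑ y ∈ C, f y ≤ (#C - 1) * c := by
  rw [← sum_erase C h0, ← card_erase_of_mem hv, ← smul_eq_mul]
  exact sum_le_card_nsmul _ _ _ fun y hy => hf y (mem_of_mem_erase hy) (ne_of_mem_erase hy)

section Counting

variable {α : Type*} [DecidableEq α]

def sepCount (𝒮 : Finset (Finset α)) (x y : α) : ℕ := #{S ∈ 𝒮 | x ∈ S ∧ y ∉ S}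

@[simp] lemma sepCount_self (𝒮 : Finset (Finset α)) (x : α) : sepCount 𝒮 x x = 0 := by
  simp [sepCount]

lemma sepCount_mono {𝒜 ℬ : Finset (Finset α)} (h : 𝒜 ⊆ ℬ) (x y : α) :
    sepCount 𝒜 x y ≤ sepCount ℬ x y :=
  card_le_card (filter_subset_filter _ h)

variable {C : Finset α} {𝒮 : Finset (Finset α)}

lemma sum_sepCount_left (v : α) :
    ∑ y ∈ C, sepCount 𝒮 v y = ∑ S ∈ 𝒮 with v ∈ S, #(C \ S) := by
  simp only [sepCount, card_filter, sum_filter]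
  rw [sum_comm]
  refine sum_congr rfl fun S _ => ?_
  split_ifs with hv <;> simp [hv, sdiff_eq_filter, card_filter]

lemma sum_sepCount_right (hsub : ∀ S ∈ 𝒮, S ⊆ C) (v : α) :
    ∑ x ∈ C, sepCount 𝒮 x v = ∑ S ∈ 𝒮 with v ∉ S, #S := by
  simp only [sepCount, card_filter, sum_filter]
  rw [sum_comm]
  refine sum_congr rfl fun S hS => ?_
  split_ifs with hv
  · simp [hv]
  · simp only [hv, not_false_eq_true, and_true, ← card_filter]
    rw [filter_mem_eq_inter, inter_eq_right.2 (hsub S hS)]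

lemma sum_sum_sepCount (hsub : ∀ S ∈ 𝒮, S ⊆ C) :
    ∑ x ∈ C, ∑ y ∈ C, sepCount 𝒮 x y = ∑ S ∈ 𝒮, #S * #(C \ S) := by
  simp_rw [sum_sepCount_left, sum_filter]
  rw [sum_comm]
  refine sum_congr rfl fun S hS => ?_
  rw [← sum_filter, filter_mem_eq_inter, inter_eq_right.2 (hsub S hS), sum_const, smul_eq_mul]

lemma sum_sum_sepCount_le {k : ℕ}
    (hcap : ∀ x ∈ C, ∀ y ∈ C, x ≠ y → sepCount 𝒮 x y ≤ k) :
    ∑ x ∈ C, ∑ y ∈ C, sepCount 𝒮 x y ≤ k * (#C * (#C - 1)) := by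
  calc ∑ x ∈ C, ∑ y ∈ C, sepCount 𝒮 x y
      = ∑ x ∈ C, ∑ y ∈ C.erase x, sepCount 𝒮 x y :=
        sum_congr rfl fun x _ => (sum_erase C (sepCount_self 𝒮 x)).symm
    _ ≤ ∑ x ∈ C, ∑ _y ∈ C.erase x, k :=
        sum_le_sum fun x hx => sum_le_sum fun y hy =>
          hcap x hx y (mem_of_mem_erase hy) (ne_of_mem_erase hy).symm
    _ = k * (#C * (#C - 1)) := by
        rw [sum_congr rfl fun x hx => by rw [sum_const, card_erase_of_mem hx], sum_const]
        simp only [smul_eq_mul]; ring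

lemma sum_sum_sepCount_eq_add {v : α} (hv : v ∈ C) :
    ∑ x ∈ C, ∑ y ∈ C, sepCount 𝒮 x y = ∑ y ∈ C, sepCount 𝒮 v y + ∑ x ∈ C, sepCount 𝒮 x v +
      ∑ x ∈ C.erase v, ∑ y ∈ C.erase v, sepCount 𝒮 x y := by
  rw [← add_sum_erase C _ hv, ← add_sum_erase C (fun x => sepCount 𝒮 x v) hv, sepCount_self,
    zero_add, add_assoc, ← sum_add_distrib]
  exact congrArg _ (sum_congr rfl fun x _ => (add_sum_erase C _ hv).symm)

end Counting

section ExtremesMiddles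

variable {α : Type*} [DecidableEq α] (C : Finset α) (𝒮 : Finset (Finset α))

def extremes : Finset (Finset α) := {S ∈ 𝒮 | #S = 1 ∨ #S + 1 = #C}

def middles : Finset (Finset α) := {S ∈ 𝒮 | 2 ≤ #S ∧ #S + 2 ≤ #C}

variable {C 𝒮}

lemma card_le_one_add_card_extremes_add_card_middles (hsub : ∀ S ∈ 𝒮, S ⊆ C)
    (hne : ∀ S ∈ 𝒮, S.Nonempty) :
    #𝒮 ≤ 1 + #(extremes C 𝒮) + #(middles C 𝒮) := by
  have hcover : 𝒮 ⊆ insert C (extremes C 𝒮 ∪ middles C 𝒮) := by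
    intro S hS
    have h1 := (hne S hS).card_pos
    have h2 := card_le_card (hsub S hS)
    rcases eq_or_ne S C with rfl | hSC
    · exact mem_insert_self _ _
    have h3 : #S < #C := card_lt_card ((hsub S hS).ssubset_of_ne hSC)
    simp only [mem_insert, mem_union, extremes, middles, mem_filter, hS, true_and]
    omega
  calc #𝒮 ≤ #(insert C (extremes C 𝒮 ∪ middles C 𝒮)) := card_le_card hcover
    _ ≤ #(extremes C 𝒮 ∪ middles C 𝒮) + 1 := card_insert_le _ _
    _ ≤ 1 + #(extremes C 𝒮) + #(middles C 𝒮) := by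
        linarith [card_union_le (extremes C 𝒮) (middles C 𝒮)]

lemma extremes_subset (hsub : ∀ S ∈ 𝒮, S ⊆ C) :
    extremes C 𝒮 ⊆
      {x ∈ C | {x} ∈ 𝒮}.image singleton ∪ {y ∈ C | C.erase y ∈ 𝒮}.image C.erase := by
  intro S hS
  obtain ⟨hS𝒮, h1 | h1⟩ := mem_filter.1 hS
  · obtain ⟨x, rfl⟩ := card_eq_one.1 h1
    exact mem_union_left _
      (mem_image_of_mem _ (mem_filter.2 ⟨hsub _ hS𝒮 (mem_singleton_self x), hS𝒮⟩))
  · have : #(C \ S) = 1 := by rw [card_sdiff_of_subset (hsub S hS𝒮)]; omega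
    obtain ⟨y, hy⟩ := card_eq_one.1 this
    have hyC : y ∈ C := (mem_sdiff.1 (hy ▸ mem_singleton_self y)).1
    have hSy : C.erase y = S := by
      rw [← sdiff_singleton_eq_erase, ← hy, Finset.sdiff_sdiff_eq_self (hsub S hS𝒮)]
    exact mem_union_right _ (mem_image.2 ⟨y, mem_filter.2 ⟨hyC, hSy ▸ hS𝒮⟩, hSy⟩)

lemma card_extremes_le (hsub : ∀ S ∈ 𝒮, S ⊆ C) :
    #(extremes C 𝒮) ≤ #{x ∈ C | {x} ∈ 𝒮} + #{y ∈ C | C.erase y ∈ 𝒮} :=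
  (card_le_card (extremes_subset hsub)).trans <|
    (card_union_le _ _).trans (add_le_add card_image_le card_image_le)

lemma two_mul_sub_two_le_mul_sub {s t : ℕ} (hs : 2 ≤ s) (hst : s + 2 ≤ t) :
    2 * (t - 2) ≤ s * (t - s) := by
  obtain ⟨a, rfl⟩ := Nat.exists_eq_add_of_le hs
  obtain ⟨b, rfl⟩ := Nat.exists_eq_add_of_le hst
  rw [show 2 + a + 2 + b - 2 = 2 + a + b by omega, show 2 + a + 2 + b - (2 + a) = 2 + b by omega]
  nlinarith

lemma weight_le {k : ℕ} (hsub : ∀ S ∈ 𝒮, S ⊆ C)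
    (hcap : ∀ x ∈ C, ∀ y ∈ C, x ≠ y → sepCount 𝒮 x y ≤ k) :
    (#C - 1) * #(extremes C 𝒮) + 2 * (#C - 2) * #(middles C 𝒮) ≤ k * (#C * (#C - 1)) := by
  have hw : ∀ S ∈ 𝒮, #S * #(C \ S) = #S * (#C - #S) := fun S hS => by
    rw [card_sdiff_of_subset (hsub S hS)]
  have hdisj : Disjoint (extremes C 𝒮) (middles C 𝒮) := by
    simp only [extremes, middles, disjoint_filter]; omega
  calc (#C - 1) * #(extremes C 𝒮) + 2 * (#C - 2) * #(middles C 𝒮)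
      ≤ ∑ S ∈ extremes C 𝒮, #S * #(C \ S) + ∑ S ∈ middles C 𝒮, #S * #(C \ S) := by
        rw [mul_comm, mul_comm (2 * _)]
        refine add_le_add (card_nsmul_le_sum _ _ _ fun S hS => ?_)
          (card_nsmul_le_sum _ _ _ fun S hS => ?_)
        · obtain ⟨hS𝒮, h | h⟩ := mem_filter.1 hS <;> rw [hw S hS𝒮]
          · rw [h, one_mul]
          · rw [← h, Nat.add_sub_cancel_left, mul_one, Nat.add_sub_cancel]
        · obtain ⟨hS𝒮, h⟩ := mem_filter.1 hS
          rw [hw S hS𝒮]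
          exact two_mul_sub_two_le_mul_sub h.1 h.2
    _ = ∑ S ∈ extremes C 𝒮 ∪ middles C 𝒮, #S * #(C \ S) := (sum_union hdisj).symm
    _ ≤ ∑ S ∈ 𝒮, #S * #(C \ S) :=
        sum_le_sum_of_subset (union_subset (filter_subset _ _) (filter_subset _ _))
    _ ≤ k * (#C * (#C - 1)) := sum_sum_sepCount hsub ▸ sum_sum_sepCount_le hcap

end ExtremesMiddles

section CapOne

variable {α : Type*} [DecidableEq α] {C : Finset α} {ℳ : Finset (Finset α)}

lemma exists_mem_ne_ne_of_two_lt_card {s : Finset α} (hs : 2 < #s) (a b : α) :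
    ∃ c ∈ s, c ≠ a ∧ c ≠ b := by
  have : 0 < #((s.erase a).erase b) := by
    have h1 := pred_card_le_card_erase (s := s) (a := a)
    have h2 := pred_card_le_card_erase (s := s.erase a) (a := b)
    omega
  obtain ⟨c, hc⟩ := card_pos.1 this
  exact ⟨c, mem_of_mem_erase (mem_of_mem_erase hc), ne_of_mem_erase (mem_of_mem_erase hc),
    ne_of_mem_erase hc⟩

lemma mul_card_le_of_pairwiseDisjoint {r : ℕ} (hsub : ∀ S ∈ ℳ, S ⊆ C)
    (hsize : ∀ S ∈ ℳ, r ≤ #S) (hdisj : (ℳ : Set (Finset α)).PairwiseDisjoint id) :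
    r * #ℳ ≤ #C :=
  calc r * #ℳ ≤ ∑ S ∈ ℳ, #S := by rw [mul_comm]; exact card_nsmul_le_sum _ _ _ hsize
    _ = #(ℳ.biUnion id) := (card_biUnion hdisj).symm
    _ ≤ #C := card_le_card (biUnion_subset.2 hsub)

lemma sdiff_subset_of_sepCount_le_one
    (hcap : ∀ x ∈ C, ∀ y ∈ C, x ≠ y → sepCount ℳ x y ≤ 1)
    {S T : Finset α} (hS : S ∈ ℳ) (hT : T ∈ ℳ) (hST : S ≠ T) (hSC : S ⊆ C)
    (hmeet : ¬Disjoint S T) : C \ T ⊆ S := by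
  obtain ⟨x, hxS, hxT⟩ := not_disjoint_iff.1 hmeet
  intro y hy
  obtain ⟨hyC, hyT⟩ := mem_sdiff.1 hy
  by_contra hyS
  have hpair : {S, T} ⊆ {Z ∈ ℳ | x ∈ Z ∧ y ∉ Z} := by
    intro Z hZ
    rcases mem_insert.1 hZ with rfl | hZ
    · exact mem_filter.2 ⟨hS, hxS, hyS⟩
    · rw [mem_singleton.1 hZ]; exact mem_filter.2 ⟨hT, hxT, hyT⟩
  have h1 := hcap x (hSC hxS) y hyC (by rintro rfl; exact hyS hxS)
  have h2 := card_le_card hpair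
  rw [card_pair hST] at h2
  exact absurd (h2.trans h1) (by norm_num)

lemma card_le_two_of_sepCount_le_one (hsub : ∀ S ∈ ℳ, S ⊆ C)
    (hsize : ∀ S ∈ ℳ, 2 ≤ #S ∧ #S + 2 ≤ #C) (hC : #C ≤ 5)
    (hcap : ∀ x ∈ C, ∀ y ∈ C, x ≠ y → sepCount ℳ x y ≤ 1) : #ℳ ≤ 2 := by
  by_contra! h3
  have hcov : ∀ S ∈ ℳ, ∀ T ∈ ℳ, S ≠ T → ¬Disjoint S T → C \ T ⊆ S := fun S hS T hT hST =>
    sdiff_subset_of_sepCount_le_one hcap hS hT hST (hsub S hS)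
  obtain ⟨S, hS, T, hT, hST, hmeet⟩ : ∃ S ∈ ℳ, ∃ T ∈ ℳ, S ≠ T ∧ ¬Disjoint S T := by
    by_contra! hdisj
    have := mul_card_le_of_pairwiseDisjoint hsub (fun S hS => (hsize S hS).1) hdisj
    omega
  obtain ⟨U, hU, hUS, hUT⟩ := exists_mem_ne_ne_of_two_lt_card h3 S T
  -- if `U` meets `V`, then `U ⊇ C \ V`, and `C \ V` lies in any `W` that meets `V`
  have hmeet_of_meet : ∀ V ∈ ℳ, ∀ W ∈ ℳ, V ≠ W → ¬Disjoint V W → U ≠ V → U ≠ W →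
      ¬Disjoint U V → ¬Disjoint U W := by
    intro V hV W hW hVW hVW' hUV hUW hUV'
    obtain ⟨z, hz⟩ : (C \ V).Nonempty := by
      rw [← card_pos, card_sdiff_of_subset (hsub V hV)]; have := hsize V hV; omega
    exact not_disjoint_iff.2 ⟨z, hcov U hU V hV hUV hUV' hz,
      hcov W hW V hV hVW.symm (by rwa [disjoint_comm]) hz⟩
  have hUST : ¬Disjoint U S ∧ ¬Disjoint U T := by
    obtain ⟨u, hu⟩ := card_pos.1 (lt_of_lt_of_le two_pos (hsize U hU).1)
    by_cases huT : u ∈ T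
    · have hUT' := not_disjoint_iff.2 ⟨u, hu, huT⟩
      exact ⟨hmeet_of_meet T hT S hS hST.symm (by rwa [disjoint_comm]) hUT hUS hUT', hUT'⟩
    · have huS := hcov S hS T hT hST hmeet (mem_sdiff.2 ⟨hsub U hU hu, huT⟩)
      have hUS' := not_disjoint_iff.2 ⟨u, hu, huS⟩
      exact ⟨hUS', hmeet_of_meet S hS T hT hST hmeet hUS hUT hUS'⟩
  have hdisj : Disjoint (C \ S) (C \ T) :=
    disjoint_left.2 fun z hz hz' => (mem_sdiff.1 hz).2 (hcov S hS T hT hST hmeet hz')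
  have := card_le_card (union_subset (hcov U hU S hS hUS hUST.1) (hcov U hU T hT hUT hUST.2))
  rw [card_union_of_disjoint hdisj, card_sdiff_of_subset (hsub S hS),
    card_sdiff_of_subset (hsub T hT)] at this
  have := hsize S hS; have := hsize T hT; have := hsize U hU
  omega

end CapOne

section FivePoints

variable {α : Type*} [DecidableEq α] {C : Finset α} {ℳ : Finset (Finset α)}

lemma card_le_three_of_sepCount_le (hsub : ∀ S ∈ ℳ, S ⊆ C)
    (hsize : ∀ S ∈ ℳ, 2 ≤ #S ∧ #S + 2 ≤ #C) (hC : #C = 5) {v : α} (hv : v ∈ C)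
    (hcap : ∀ x ∈ C, ∀ y ∈ C, x ≠ y → sepCount ℳ x y ≤ 2)
    (hcap' : (∀ x ∈ C, ∀ y ∈ C, x ≠ y → x ≠ v → sepCount ℳ x y ≤ 1) ∨
      (∀ x ∈ C, ∀ y ∈ C, x ≠ y → y ≠ v → sepCount ℳ x y ≤ 1)) :
    #ℳ ≤ 3 := by
  -- The `6 * #ℳ` separations split into those from `v` (at most `3` per member containing `v`),
  -- those into `v` (at most `3` per member missing `v`), and at most `12` among the other points;
  -- one of the first two kinds is also capped by `4`.
  have htotal : ∑ x ∈ C, ∑ y ∈ C, sepCount ℳ x y = 6 * #ℳ := by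
    rw [sum_sum_sepCount hsub, sum_congr rfl fun S hS => ?_, sum_const, smul_eq_mul, mul_comm]
    rw [card_sdiff_of_subset (hsub S hS), hC]
    obtain h | h : #S = 2 ∨ #S = 3 := by have := hsize S hS; omega
    all_goals rw [h]
  have hrest : ∑ x ∈ C.erase v, ∑ y ∈ C.erase v, sepCount ℳ x y ≤
      1 * (#(C.erase v) * (#(C.erase v) - 1)) := by
    refine sum_sum_sepCount_le fun x hx y hy hxy => ?_
    rcases hcap' with h | h
    · exact h x (mem_of_mem_erase hx) y (mem_of_mem_erase hy) hxy (ne_of_mem_erase hx)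
    · exact h x (mem_of_mem_erase hx) y (mem_of_mem_erase hy) hxy (ne_of_mem_erase hy)
  have hout : ∑ y ∈ C, sepCount ℳ v y ≤ 3 * #{S ∈ ℳ | v ∈ S} := by
    rw [sum_sepCount_left, mul_comm, ← smul_eq_mul]
    refine sum_le_card_nsmul _ _ _ fun S hS => ?_
    have := hsize S (mem_filter.1 hS).1
    rw [card_sdiff_of_subset (hsub S (mem_filter.1 hS).1)]; omega
  have hin : ∑ x ∈ C, sepCount ℳ x v ≤ 3 * #{S ∈ ℳ | v ∉ S} := by
    rw [sum_sepCount_right hsub, mul_comm, ← smul_eq_mul]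
    refine sum_le_card_nsmul _ _ _ fun S hS => ?_
    have := hsize S (mem_filter.1 hS).1; omega
  have hout₂ : ∑ y ∈ C, sepCount ℳ v y ≤ (#C - 1) * 2 :=
    sum_le_card_sub_one_mul hv (sepCount_self ℳ v) fun y hy hyv => hcap v hv y hy hyv.symm
  have hin₂ : ∑ x ∈ C, sepCount ℳ x v ≤ (#C - 1) * 2 :=
    sum_le_card_sub_one_mul hv (sepCount_self ℳ v) fun x hx hxv => hcap x hx v hv hxv
  have hone : ∑ x ∈ C, sepCount ℳ x v ≤ (#C - 1) * 1 ∨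
      ∑ y ∈ C, sepCount ℳ v y ≤ (#C - 1) * 1 := by
    rcases hcap' with h | h
    · exact Or.inl (sum_le_card_sub_one_mul hv (sepCount_self ℳ v) fun x hx hxv =>
        h x hx v hv hxv hxv)
    · exact Or.inr (sum_le_card_sub_one_mul hv (sepCount_self ℳ v) fun y hy hyv =>
        h v hv y hy hyv.symm hyv)
  have := sum_sum_sepCount_eq_add (𝒮 := ℳ) hv
  have := card_filter_add_card_filter_not (s := ℳ) (fun S => v ∈ S)
  rw [card_erase_of_mem hv, hC] at hrest
  rw [hC] at hout₂ hin₂ hone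
  omega

end FivePoints

section CapThree

lemma singleton_mem_extremes {α : Type*} {C : Finset α} {𝒮 : Finset (Finset α)} {x : α}
    (h : {x} ∈ 𝒮) : {x} ∈ extremes C 𝒮 :=
  mem_filter.2 ⟨h, Or.inl (card_singleton x)⟩

variable {α : Type*} [DecidableEq α] {C : Finset α} {𝒮 : Finset (Finset α)}

lemma exists_forall_ne_of_card_filter {p : α → Prop} [DecidablePred p] (hC : C.Nonempty)
    (h : #C ≤ #{x ∈ C | p x} + 1) : ∃ v ∈ C, ∀ y ∈ C, y ≠ v → p y := by
  by_cases hall : ∀ y ∈ C, p y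
  · obtain ⟨v, hv⟩ := hC
    exact ⟨v, hv, fun y hy _ => hall y hy⟩
  obtain ⟨v, hv, hpv⟩ := not_forall₂.1 hall
  refine ⟨v, hv, fun y hy hyv => ?_⟩
  by_contra hpy
  have hsub : {v, y} ⊆ {x ∈ C | ¬p x} := by
    intro z hz
    rcases mem_insert.1 hz with rfl | hz
    · exact mem_filter.2 ⟨hv, hpv⟩
    · rw [mem_singleton.1 hz]; exact mem_filter.2 ⟨hy, hpy⟩
  have h2 := card_le_card hsub
  rw [card_pair hyv.symm] at h2
  have := card_filter_add_card_filter_not (s := C) fun x => p x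
  omega

lemma sepCount_middles_add_card_le {x y : α} {ℬ : Finset (Finset α)} (hℬ : ℬ ⊆ extremes C 𝒮)
    (hsep : ∀ Z ∈ ℬ, x ∈ Z ∧ y ∉ Z) : sepCount (middles C 𝒮) x y + #ℬ ≤ sepCount 𝒮 x y := by
  have hdisj : Disjoint {S ∈ middles C 𝒮 | x ∈ S ∧ y ∉ S} ℬ := by
    refine disjoint_left.2 fun S hS hSℬ => ?_
    have h1 := (mem_filter.1 (mem_filter.1 hS).1).2
    have h2 := (mem_filter.1 (hℬ hSℬ)).2
    omega
  rw [sepCount, ← card_union_of_disjoint hdisj]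
  refine card_le_card (union_subset (filter_subset_filter _ (filter_subset _ _)) fun Z hZ => ?_)
  exact mem_filter.2 ⟨(mem_filter.1 (hℬ hZ)).1, hsep Z hZ⟩

variable {x y : α}

lemma erase_mem_extremes (hy : y ∈ C) (h : C.erase y ∈ 𝒮) : C.erase y ∈ extremes C 𝒮 :=
  mem_filter.2 ⟨h, Or.inr (by rw [card_erase_add_one hy])⟩

lemma sepCount_middles_add_two_le (hC : 3 ≤ #C) (hx : x ∈ C) (hy : y ∈ C) (hxy : x ≠ y)
    (hx𝒮 : {x} ∈ 𝒮) (hy𝒮 : C.erase y ∈ 𝒮) :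
    sepCount (middles C 𝒮) x y + 2 ≤ sepCount 𝒮 x y := by
  have hne : ({x} : Finset α) ≠ C.erase y := fun h => by
    have := congrArg card h
    rw [card_singleton, card_erase_of_mem hy] at this
    omega
  rw [← card_pair hne]
  refine sepCount_middles_add_card_le (insert_subset (singleton_mem_extremes hx𝒮)
    (singleton_subset_iff.2 (erase_mem_extremes hy hy𝒮))) fun Z hZ => ?_
  rcases mem_insert.1 hZ with rfl | hZ
  · exact ⟨mem_singleton_self x, by simpa using hxy.symm⟩
  · rw [mem_singleton.1 hZ]
    exact ⟨mem_erase.2 ⟨hxy, hx⟩, notMem_erase y C⟩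

lemma sepCount_middles_add_one_le (hx : x ∈ C) (hy : y ∈ C) (hxy : x ≠ y)
    (h : {x} ∈ 𝒮 ∨ C.erase y ∈ 𝒮) : sepCount (middles C 𝒮) x y + 1 ≤ sepCount 𝒮 x y := by
  obtain ⟨Z, hZ, hxZ, hyZ⟩ : ∃ Z ∈ extremes C 𝒮, x ∈ Z ∧ y ∉ Z := by
    rcases h with h | h
    · exact ⟨{x}, singleton_mem_extremes h, mem_singleton_self x, by simpa using hxy.symm⟩
    · exact ⟨C.erase y, erase_mem_extremes hy h, mem_erase.2 ⟨hxy, hx⟩, notMem_erase y C⟩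
  simpa using sepCount_middles_add_card_le (singleton_subset_iff.2 hZ)
    (by simpa using And.intro hxZ hyZ)

lemma card_middles_le_two (hsub : ∀ S ∈ 𝒮, S ⊆ C)
    (hcap : ∀ x ∈ C, ∀ y ∈ C, x ≠ y → sepCount 𝒮 x y ≤ 3) (hC3 : 3 ≤ #C) (hC5 : #C ≤ 5)
    (hP : ∀ x ∈ C, {x} ∈ 𝒮)
    (hQ : ∀ y ∈ C, C.erase y ∈ 𝒮) : #(middles C 𝒮) ≤ 2 := by
  refine card_le_two_of_sepCount_le_one (fun S hS => hsub S (mem_filter.1 hS).1)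
    (fun S hS => (mem_filter.1 hS).2) hC5 fun x hx y hy hxy => ?_
  have := sepCount_middles_add_two_le hC3 hx hy hxy (hP x hx) (hQ y hy)
  have := hcap x hx y hy hxy
  omega

lemma card_middles_le_three (hsub : ∀ S ∈ 𝒮, S ⊆ C)
    (hcap : ∀ x ∈ C, ∀ y ∈ C, x ≠ y → sepCount 𝒮 x y ≤ 3) (hC : #C = 5) {v : α} (hv : v ∈ C)
    (hext : (∀ x ∈ C, {x} ∈ 𝒮) ∧ (∀ y ∈ C, y ≠ v → C.erase y ∈ 𝒮) ∨
      (∀ x ∈ C, x ≠ v → {x} ∈ 𝒮) ∧ (∀ y ∈ C, C.erase y ∈ 𝒮)) :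
    #(middles C 𝒮) ≤ 3 := by
  have hone : ∀ x ∈ C, ∀ y ∈ C, x ≠ y → {x} ∈ 𝒮 → C.erase y ∈ 𝒮 →
      sepCount (middles C 𝒮) x y ≤ 1 := fun x hx y hy hxy hx𝒮 hy𝒮 => by
    have := sepCount_middles_add_two_le (by omega) hx hy hxy hx𝒮 hy𝒮
    have := hcap x hx y hy hxy
    omega
  have htwo : ∀ x ∈ C, ∀ y ∈ C, x ≠ y → sepCount (middles C 𝒮) x y ≤ 2 := fun x hx y hy hxy => by
    have := sepCount_middles_add_one_le hx hy hxy (hext.imp (fun h => h.1 x hx) fun h => h.2 y hy)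
    have := hcap x hx y hy hxy
    omega
  refine card_le_three_of_sepCount_le (fun S hS => hsub S (mem_filter.1 hS).1)
    (fun S hS => (mem_filter.1 hS).2) hC hv htwo ?_
  rcases hext with ⟨hP, hQ⟩ | ⟨hP, hQ⟩
  · exact Or.inr fun x hx y hy hxy hyv => hone x hx y hy hxy (hP x hx) (hQ y hy hyv)
  · exact Or.inl fun x hx y hy hxy hxv => hone x hx y hy hxy (hP x hx hxv) (hQ y hy)

lemma card_le_two_mul_add_three (hsub : ∀ S ∈ 𝒮, S ⊆ C)
    (hcap : ∀ x ∈ C, ∀ y ∈ C, x ≠ y → sepCount 𝒮 x y ≤ 3) (hne : ∀ S ∈ 𝒮, S.Nonempty)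
    (hC4 : 4 ≤ #C) (hC5 : #C ≤ 5) :
    #𝒮 ≤ 2 * #C + 3 := by
  have h1 := card_le_one_add_card_extremes_add_card_middles hsub hne
  have h2 := card_extremes_le hsub
  have h3 := weight_le hsub hcap
  set P := {x ∈ C | {x} ∈ 𝒮}
  set Q := {y ∈ C | C.erase y ∈ 𝒮}
  have hPle : #P ≤ #C := card_filter_le _ _
  have hQle : #Q ≤ #C := card_filter_le _ _
  have hfull : 2 * #C ≤ #P + #Q → #(middles C 𝒮) ≤ 2 := fun h =>
    card_middles_le_two hsub hcap (by omega) hC5 (card_filter_eq_iff.1 (show #P = #C by omega))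
      (card_filter_eq_iff.1 (show #Q = #C by omega))
  have hfive : #C = 5 → 2 * #C ≤ #P + #Q + 1 → #(middles C 𝒮) ≤ 3 := fun hC h => by
    have hCne : C.Nonempty := card_pos.1 (by omega)
    by_cases hPC : #P = #C
    · obtain ⟨v, hv, hQv⟩ := exists_forall_ne_of_card_filter hCne (show #C ≤ #Q + 1 by omega)
      exact card_middles_le_three hsub hcap hC hv (Or.inl ⟨card_filter_eq_iff.1 hPC, hQv⟩)
    · obtain ⟨v, hv, hPv⟩ := exists_forall_ne_of_card_filter hCne (show #C ≤ #P + 1 by omega)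
      exact card_middles_le_three hsub hcap hC hv
        (Or.inr ⟨hPv, card_filter_eq_iff.1 (show #Q = #C by omega)⟩)
  obtain h | h : #C = 4 ∨ #C = 5 := by omega
  all_goals rw [h] at h3 hfull hfive ⊢; omega

end CapThree

section Arithmetic

lemma two_mul_sub_two_mul_le {t e m s k : ℕ} (ht : 3 ≤ t) (hs : s ≤ 1 + e + m) (he : e ≤ 2 * t)
    (hw : (t - 1) * e + 2 * (t - 2) * m ≤ k * (t * (t - 1))) :
    2 * (t - 2) * s ≤ 2 * (t - 2) + 2 * t * (t - 3) + k * (t * (t - 1)) := by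
  have h1 : 2 * (t - 2) * s ≤ 2 * (t - 2) * (1 + e + m) := Nat.mul_le_mul_left _ hs
  have h2 : (t - 3) * e ≤ (t - 3) * (2 * t) := Nat.mul_le_mul_left _ he
  have h3 : 2 * (t - 2) = (t - 1) + (t - 3) := by omega
  nlinarith

lemma cast_le_cp_mul {p t s : ℕ} (hp : p ∈ Icc 3 9) (hpow : s ≤ 2 ^ t - 1)
    (hw : 4 ≤ t → 2 * (t - 2) * s ≤ 2 * (t - 2) + 2 * t * (t - 3) + (p - 1) * (t * (t - 1)))
    (h4 : p = 4 → 4 ≤ t → t ≤ 5 → s ≤ 2 * t + 3) : (s : ℚ) ≤ cp p * t := by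
  obtain ⟨hp3, hp9⟩ := mem_Icc.1 hp
  rcases le_or_gt t 6 with ht6 | ht7
  -- for small `t` the rational bound may fail, so integrality of `s` is needed
  · rw [← Nat.le_floor_iff (by unfold cp; split_ifs <;> positivity)]
    interval_cases p <;> interval_cases t <;> norm_num [cp] <;> omega
  · replace hw := hw (by omega)
    qify [show 3 ≤ t by omega, show 2 ≤ t by omega, show 1 ≤ t by omega, show 1 ≤ p by omega] at hw
    have ht7 : (7 : ℚ) ≤ t := by exact_mod_cast ht7
    refine le_of_mul_le_mul_left (hw.trans ?_) (by linarith : (0 : ℚ) < 2 * (t - 2))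
    interval_cases p <;> norm_num [cp] <;> nlinarith

end Arithmetic

theorem card_le_cp_mul {α : Type*} [DecidableEq α] {C : Finset α} {𝒮 : Finset (Finset α)} {p : ℕ}
    (hp : p ∈ Icc 3 9) (hsub : ∀ S ∈ 𝒮, S ⊆ C) (hne : ∀ S ∈ 𝒮, S.Nonempty)
    (hcap : ∀ x ∈ C, ∀ y ∈ C, x ≠ y → sepCount 𝒮 x y ≤ p - 1) :
    (#𝒮 : ℚ) ≤ cp p * #C := by
  refine cast_le_cp_mul hp ?_ (fun hC => ?_) fun hp4 hC4 hC5 => ?_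
  · calc #𝒮 ≤ #(C.powerset.erase ∅) := card_le_card fun S hS =>
          mem_erase.2 ⟨(hne S hS).ne_empty, mem_powerset.2 (hsub S hS)⟩
      _ = 2 ^ #C - 1 := by rw [card_erase_of_mem (empty_mem_powerset C), card_powerset]
  · refine two_mul_sub_two_mul_le (by omega)
      (card_le_one_add_card_extremes_add_card_middles hsub hne)
      ((card_extremes_le hsub).trans ?_) (weight_le hsub hcap)
    linarith [card_filter_le C fun x => {x} ∈ 𝒮, card_filter_le C fun y => C.erase y ∈ 𝒮]
  · subst hp4
    exact card_le_two_mul_add_three hsub hcap hne hC4 hC5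

def RowImplies {α : Type*} (A : Finset (Finset α)) (i j : α) : Prop := ∀ X ∈ A, i ∈ X → j ∈ X

section RowImplies

variable {α : Type*} [DecidableEq α] {A : Finset (Finset α)} {i j : α}

lemma sepCount_pos_iff : 0 < sepCount A i j ↔ ∃ X ∈ A, i ∈ X ∧ j ∉ X := by
  simp [sepCount, card_pos, filter_nonempty_iff]

lemma sepCount_eq_zero_iff : sepCount A i j = 0 ↔ RowImplies A i j := by
  simp [sepCount, RowImplies, filter_eq_empty_iff]

end RowImplies

lemma sepCount_image_inter_le {α : Type*} [DecidableEq α] {𝒜 : Finset (Finset α)}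
    {C : Finset α} (x : α) {y : α} (hy : y ∈ C) :
    sepCount (𝒜.image (· ∩ C)) x y ≤ sepCount 𝒜 x y := by
  rw [sepCount, filter_image]
  refine card_image_le.trans (card_le_card (monotone_filter_right _ fun X _ h => ?_))
  rw [mem_inter, mem_inter] at h
  exact ⟨h.1.1, fun hyX => h.2 ⟨hyX, hy⟩⟩

def SimpleGraph.IsClusterGraph {V : Type*} (G : SimpleGraph V) : Prop :=
  ∀ i j, G.Reachable i j → i ≠ j → G.Adj i j

section Graph

variable {p m : ℕ} {A : Finset (Finset (Fin m))}

lemma configGraph_adj_iff {i j : Fin m} : (configGraph p m A).Adj i j ↔ i ≠ j ∧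
    (0 < sepCount A i j ∧ sepCount A i j ≤ p - 1) ∧ (0 < sepCount A j i ∧ sepCount A j i ≤ p - 1) :=
  Iff.rfl

lemma rowImplies_or_of_not_adj (hA : AvoidsF010 p m A) {i j : Fin m} (hij : i ≠ j)
    (h : ¬(configGraph p m A).Adj i j) : RowImplies A i j ∨ RowImplies A j i := by
  by_contra! hboth
  simp only [← sepCount_eq_zero_iff, ← Nat.pos_iff_ne_zero] at hboth
  exact h ⟨hij, ⟨hboth.1, hA i j hij (sepCount_pos_iff.1 hboth.2)⟩,
    ⟨hboth.2, hA j i hij.symm (sepCount_pos_iff.1 hboth.1)⟩⟩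

def IsBottomRow (p : ℕ) (A : Finset (Finset (Fin m))) (X : Finset (Fin m)) (b : Fin m) : Prop :=
  b ∈ X ∧ ∀ j ∈ X, ¬(configGraph p m A).Reachable b j → RowImplies A b j

lemma IsBottomRow.mem_iff {X : Finset (Fin m)} {b j : Fin m} (hb : IsBottomRow p A X b)
    (hX : X ∈ A) (hj : ¬(configGraph p m A).Reachable b j) : j ∈ X ↔ RowImplies A b j :=
  ⟨fun h => hb.2 j h hj, fun h => h X hX hb.1⟩

lemma exists_isBottomRow (hA : AvoidsF010 p m A) {X : Finset (Fin m)} (hX : X.Nonempty) :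
    ∃ b, IsBottomRow p A X b := by
  obtain ⟨b, hb, hmin⟩ := X.exists_min_image (fun i => #{Y ∈ A | i ∈ Y}) hX
  refine ⟨b, hb, fun j hj hbj => ?_⟩
  have hne : b ≠ j := fun h => hbj (h ▸ SimpleGraph.Reachable.refl b)
  rcases rowImplies_or_of_not_adj hA hne fun h => hbj h.reachable with h | hjb
  · exact h
  by_contra hbj'
  obtain ⟨Y, hY, hbY, hjY⟩ :=
    sepCount_pos_iff.1 (Nat.pos_of_ne_zero (mt sepCount_eq_zero_iff.1 hbj'))
  have hlt : #{Y ∈ A | j ∈ Y} < #{Y ∈ A | b ∈ Y} := card_lt_card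
    ⟨monotone_filter_right A fun Z hZ hjZ => hjb Z hZ hjZ,
      fun h => hjY (mem_filter.1 (h (mem_filter.2 ⟨hY, hbY⟩))).2⟩
  exact (hmin j hj).not_gt hlt

lemma rowImplies_of_adj (hA : AvoidsF010 p m A) {b b' j : Fin m}
    (hadj : (configGraph p m A).Adj b b')
    (hj : ¬(configGraph p m A).Reachable b j) (h : RowImplies A b j) : RowImplies A b' j := by
  by_contra h'
  have hb'j : b' ≠ j := fun e => hj (e ▸ hadj.reachable)
  have hjb' := (rowImplies_or_of_not_adj hA hb'j fun h =>
    hj (hadj.reachable.trans h.reachable)).resolve_left h'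
  obtain ⟨X, hX, hbX, hb'X⟩ := sepCount_pos_iff.1 (configGraph_adj_iff.1 hadj).2.1.1
  exact hb'X (hjb' X hX (h X hX hbX))

lemma rowImplies_iff_of_reachable (hA : AvoidsF010 p m A) (hcl : (configGraph p m A).IsClusterGraph)
    {b b' j : Fin m} (hbb' : (configGraph p m A).Reachable b b')
    (hj : ¬(configGraph p m A).Reachable b j) : RowImplies A b j ↔ RowImplies A b' j := by
  rcases eq_or_ne b b' with rfl | hne
  · rfl
  have hadj := hcl b b' hbb' hne
  exact ⟨rowImplies_of_adj hA hadj hj, rowImplies_of_adj hA hadj.symm fun h => hj (hbb'.trans h)⟩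

lemma eq_of_isBottomRow (hA : AvoidsF010 p m A) (hcl : (configGraph p m A).IsClusterGraph)
    {X Y : Finset (Fin m)} {b b' : Fin m} (hX : X ∈ A) (hY : Y ∈ A)
    (hb : IsBottomRow p A X b) (hb' : IsBottomRow p A Y b')
    (hbb' : (configGraph p m A).Reachable b b')
    (hXY : ∀ j, (configGraph p m A).Reachable b j → (j ∈ X ↔ j ∈ Y)) : X = Y := by
  ext j
  by_cases hj : (configGraph p m A).Reachable b j
  · exact hXY j hj
  have hj' : ¬(configGraph p m A).Reachable b' j := fun h => hj (hbb'.trans h)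
  rw [hb.mem_iff hX hj, hb'.mem_iff hY hj', rowImplies_iff_of_reachable hA hcl hbb' hj]

lemma card_le_cp_mul_of_isBottomRow (hp : p ∈ Icc 3 9) (hA : AvoidsF010 p m A)
    (hcl : (configGraph p m A).IsClusterGraph) {C : Finset (Fin m)}
    (hC : ∀ i ∈ C, ∀ j, j ∈ C ↔ (configGraph p m A).Reachable i j) {F : Finset (Finset (Fin m))}
    (hF : ∀ X ∈ F, X ∈ A ∧ ∃ b ∈ C, IsBottomRow p A X b) : (#F : ℚ) ≤ cp p * #C := by
  have hinj : Set.InjOn (· ∩ C) F := by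
    intro X hX Y hY hXY
    obtain ⟨hXA, b, hbC, hb⟩ := hF X hX
    obtain ⟨hYA, b', hb'C, hb'⟩ := hF Y hY
    refine eq_of_isBottomRow hA hcl hXA hYA hb hb' ((hC b hbC b').1 hb'C) fun j hj => ?_
    have hjC := (hC b hbC j).2 hj
    simpa [mem_inter, hjC] using congrArg (j ∈ ·) hXY
  rw [← card_image_of_injOn hinj]
  refine card_le_cp_mul hp (fun S hS => ?_) (fun S hS => ?_) fun x hx y hy hxy => ?_
  · obtain ⟨X, -, rfl⟩ := mem_image.1 hS
    exact inter_subset_right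
  · obtain ⟨X, hX, rfl⟩ := mem_image.1 hS
    obtain ⟨-, b, hbC, hb⟩ := hF X hX
    exact ⟨b, mem_inter.2 ⟨hb.1, hbC⟩⟩
  · calc sepCount (F.image (· ∩ C)) x y ≤ sepCount F x y := sepCount_image_inter_le x hy
      _ ≤ sepCount A x y := sepCount_mono (fun X hX => (hF X hX).1) x y
      _ ≤ p - 1 := (configGraph_adj_iff.1 (hcl x y ((hC x hx y).1 hy) hxy)).2.1.2

end Graph

theorem cliques_give_bound_general (p m : ℕ) (hp : p ∈ Finset.Icc 3 9)
    (A : Finset (Finset (Fin m))) (hA : AvoidsF010 p m A)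
    (hclique : ∀ i j : Fin m,
      (configGraph p m A).Reachable i j → i ≠ j → (configGraph p m A).Adj i j) :
    (A.card : ℚ) ≤ cp p * m + 1 := by
  classical
  set G := configGraph p m A
  let C : G.ConnectedComponent → Finset (Fin m) := fun c => {v | G.connectedComponentMk v = c}
  let F : G.ConnectedComponent → Finset (Finset (Fin m)) := fun c =>
    {X ∈ A | ∃ b ∈ C c, IsBottomRow p A X b}
  have hcover : A.erase ∅ ⊆ univ.biUnion F := fun X hX => by
    obtain ⟨hX, hXA⟩ := mem_erase.1 hX
    obtain ⟨b, hb⟩ := exists_isBottomRow hA (nonempty_iff_ne_empty.2 hX)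
    exact mem_biUnion.2
      ⟨G.connectedComponentMk b, mem_univ _, mem_filter.2 ⟨hXA, b, by simp [C], hb⟩⟩
  have hF : ∀ c, (#(F c) : ℚ) ≤ cp p * #(C c) := fun c =>
    card_le_cp_mul_of_isBottomRow hp hA hclique
      (fun i hi j => by
        rw [mem_filter_univ] at hi
        rw [mem_filter_univ, ← hi, eq_comm, SimpleGraph.ConnectedComponent.eq])
      fun X hX => mem_filter.1 hX
  have hm : ∑ c, #(C c) = m := by
    rw [← card_eq_sum_card_fiberwise fun v _ => mem_univ (G.connectedComponentMk v), card_univ,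
      Fintype.card_fin]
  calc (#A : ℚ) ≤ #(A.erase ∅) + 1 := by
        exact_mod_cast (card_le_card (insert_erase_subset ∅ A)).trans (card_insert_le _ _)
    _ ≤ ∑ c, (#(F c) : ℚ) + 1 := by
        gcongr; exact_mod_cast (card_le_card hcover).trans card_biUnion_le
    _ ≤ ∑ c, cp p * #(C c) + 1 := by gcongr with c; exact hF c
    _ = cp p * m + 1 := by rw [← mul_sum, ← Nat.cast_sum, hm]

theorem cliques_give_bound (p m : ℕ) (hp : p ∈ Finset.Icc 3 9) (hm : 1 ≤ m)
    (A : Finset (Finset (Fin m))) (hA : AvoidsF010 p m A)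
    (hclique : ∀ i j : Fin m,
      (configGraph p m A).Reachable i j → i ≠ j → (configGraph p m A).Adj i j) :
    (A.card : ℚ) ≤ cp p * m + 1 :=
  cliques_give_bound_general p m hp A hA hclique
end

section
/- Let t ≥ 2 be an integer and let m be a positive multiple of t. Then forb(m, F(0, 2^{t−2} + 1, 1, 0)) ≥ (2^t − 1)·m/t + 1; that is, there exists a family of subsets of {1,…,m} avoiding F(0, 2^{t−2}+1, 1, 0) with exactly (2^t − 1)m/t + 1 members. -/
open Finset

/-!
Cut `{0, …, m-1}` into the `m / t` consecutive blocks `{x | x / t = b}` of size `t` and take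
the sets `X` that contain every block strictly before a block they meet: `∅`, and for each
block `k` and nonempty `S` inside block `k`, the union of the blocks before `k` with `S`. There are
`(2^t - 1) · m / t + 1` of them. If `j ∈ X` and `i ∉ X`, then the block of `j` is not after
that of `i`. When it is strictly before, every member containing `i` contains `j`; when
`i` and `j` share a block, a member containing `i` but not `j` is determined by its trace on
the remaining `t - 2` elements of that block, so there are at most `2^(t-2)` of them.
-/

theorem card_le_forb {p m : ℕ} {A : Finset (Finset (Fin m))} (hA : AvoidsF010 p m A) :
    #A ≤ forb m p :=
  le_csSup ⟨2 ^ m, by rintro n ⟨B, -, rfl⟩; simpa using card_le_univ B⟩ ⟨A, hA, rfl⟩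

section Blocks

variable {t m : ℕ}

theorem card_filter_div_eq_le (ht : 0 < t) (b : ℕ) :
    #(univ.filter fun x : Fin m => (x : ℕ) / t = b) ≤ t := by
  refine (card_le_card_of_injOn (fun x : Fin m => (x : ℕ) % t) (t := range t)
    (fun x _ => mem_range.2 (Nat.mod_lt _ ht)) ?_).trans (card_range t).le
  intro x hx y hy hxy
  simp only [coe_filter, mem_univ, true_and, Set.mem_ofPred_eq] at hx hy
  exact Fin.ext (by rw [← Nat.div_add_mod x t, ← Nat.div_add_mod y t, hx, hy]; exact congrArg _ hxy)

variable (t m) in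
def blockDownSets : Finset (Finset (Fin m)) :=
  univ.filter fun X => ∀ x ∈ X, ∀ y : Fin m, (y : ℕ) / t < (x : ℕ) / t → y ∈ X

theorem mem_blockDownSets {X : Finset (Fin m)} :
    X ∈ blockDownSets t m ↔ ∀ x ∈ X, ∀ y : Fin m, (y : ℕ) / t < (x : ℕ) / t → y ∈ X := by
  simp [blockDownSets]

theorem div_le_div_of_mem_blockDownSets {X : Finset (Fin m)} {i j : Fin m}
    (hX : X ∈ blockDownSets t m) (hj : j ∈ X) (hi : i ∉ X) : (j : ℕ) / t ≤ (i : ℕ) / t :=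
  not_lt.1 fun h => hi (mem_blockDownSets.1 hX j hj i h)

theorem mem_iff_div_lt_of_div_ne {Y : Finset (Fin m)} {i j x : Fin m}
    (hY : Y ∈ blockDownSets t m) (hi : i ∈ Y) (hj : j ∉ Y) (hij : (i : ℕ) / t = (j : ℕ) / t)
    (hx : (x : ℕ) / t ≠ (i : ℕ) / t) : x ∈ Y ↔ (x : ℕ) / t < (i : ℕ) / t :=
  ⟨fun hxY => lt_of_le_of_ne (hij ▸ div_le_div_of_mem_blockDownSets hY hxY hj) hx,
    fun hlt => mem_blockDownSets.1 hY i hi x hlt⟩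

theorem card_filter_mem_notMem_le (ht : 0 < t) {i j : Fin m} (hij : i ≠ j)
    (hb : (i : ℕ) / t = (j : ℕ) / t) :
    #((blockDownSets t m).filter fun Y => i ∈ Y ∧ j ∉ Y) ≤ 2 ^ (t - 2) := by
  set B := univ.filter fun x : Fin m => (x : ℕ) / t = (i : ℕ) / t
  set D := B \ {i, j}
  have hinj : Set.InjOn (· ∩ D) ((blockDownSets t m).filter fun Y => i ∈ Y ∧ j ∉ Y) := by
    simp only [Set.InjOn, coe_filter, Set.mem_ofPred_eq]
    rintro Y ⟨hY, hiY, hjY⟩ Y' ⟨hY', hiY', hjY'⟩ hYY'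
    ext x
    by_cases hx : (x : ℕ) / t = (i : ℕ) / t
    · by_cases hxij : x = i ∨ x = j
      · rcases hxij with rfl | rfl <;> simp [*]
      · have hxD : x ∈ D := by simp [D, B, hx, hxij]
        simpa [hxD] using congrArg (x ∈ ·) hYY'
    · rw [mem_iff_div_lt_of_div_ne hY hiY hjY hb hx, mem_iff_div_lt_of_div_ne hY' hiY' hjY' hb hx]
  have hD : #D ≤ t - 2 := by
    have hijB : {i, j} ⊆ B := by simp [insert_subset_iff, B, hb]
    rw [card_sdiff_of_subset hijB, card_pair hij]
    exact Nat.sub_le_sub_right (card_filter_div_eq_le ht _) 2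
  calc _ ≤ #D.powerset :=
        card_le_card_of_injOn (· ∩ D) (fun Y _ => mem_powerset.2 inter_subset_right) hinj
    _ = 2 ^ #D := card_powerset D
    _ ≤ 2 ^ (t - 2) := Nat.pow_le_pow_right two_pos hD

theorem avoidsF010_blockDownSets (ht : 0 < t) :
    AvoidsF010 (2 ^ (t - 2) + 1) m (blockDownSets t m) := by
  rintro i j hij ⟨X, hX, hjX, hiX⟩
  rw [Nat.add_sub_cancel]
  rcases (div_le_div_of_mem_blockDownSets hX hjX hiX).lt_or_eq with hlt | heq
  · have hempty : (blockDownSets t m).filter (fun Y => i ∈ Y ∧ j ∉ Y) = ∅ :=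
      filter_eq_empty_iff.2 fun Y hY ⟨hiY, hjY⟩ => hjY (mem_blockDownSets.1 hY i hiY j hlt)
    simp [hempty]
  · exact card_filter_mem_notMem_le ht hij heq.symm

variable (t m) in
def blockPrefix (k : ℕ) (S : Finset ℕ) : Finset (Fin m) :=
  univ.filter fun x => (x : ℕ) / t < k ∨ ((x : ℕ) / t = k ∧ (x : ℕ) % t ∈ S)

theorem blockPrefix_mem_blockDownSets (k : ℕ) (S : Finset ℕ) :
    blockPrefix t m k S ∈ blockDownSets t m := by
  simp only [mem_blockDownSets, blockPrefix, mem_filter, mem_univ, true_and]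
  rintro x hx y hy
  omega

theorem exists_div_eq_mod_eq {q k s : ℕ} (hk : k < q) (hs : s < t) :
    ∃ x : Fin (t * q), (x : ℕ) / t = k ∧ (x : ℕ) % t = s := by
  refine ⟨⟨k * t + s, by nlinarith⟩, ?_, ?_⟩
  · rw [Fin.val_mk, mul_comm, Nat.mul_add_div (by omega), Nat.div_eq_of_lt hs, add_zero]
  · rw [Fin.val_mk, mul_comm, Nat.mul_add_mod, Nat.mod_eq_of_lt hs]

theorem exists_mem_blockPrefix {q k s : ℕ} {S : Finset ℕ} (hk : k < q) (hs : s ∈ S)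
    (hS : S ⊆ range t) :
    ∃ x ∈ blockPrefix t (t * q) k S, (x : ℕ) / t = k ∧ (x : ℕ) % t = s := by
  obtain ⟨x, hxk, hxs⟩ := exists_div_eq_mod_eq hk (mem_range.1 (hS hs))
  exact ⟨x, by simp [blockPrefix, hxk, hxs, hs], hxk, hxs⟩

theorem lt_or_eq_and_mem_of_blockPrefix_subset {q k k' s : ℕ} {S S' : Finset ℕ} (hk : k < q)
    (hs : s ∈ S) (hS : S ⊆ range t) (h : blockPrefix t (t * q) k S ⊆ blockPrefix t (t * q) k' S') :
    k < k' ∨ (k = k' ∧ s ∈ S') := by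
  obtain ⟨x, hx, hxk, hxs⟩ := exists_mem_blockPrefix hk hs hS
  simpa [blockPrefix, hxk, hxs] using h hx

theorem blockPrefix_injOn (q : ℕ) :
    Set.InjOn (fun p : ℕ × Finset ℕ => blockPrefix t (t * q) p.1 p.2)
      (range q ×ˢ (range t).powerset.erase ∅ : Finset (ℕ × Finset ℕ)) := by
  simp only [Set.InjOn, coe_product, coe_erase, Set.mem_prod, Set.mem_sdiff, mem_coe,
    mem_range, mem_powerset, Set.mem_singleton_iff, ← nonempty_iff_ne_empty]
  rintro ⟨k, S⟩ ⟨hk, hS, s, hs⟩ ⟨k', S'⟩ ⟨hk', hS', s', hs'⟩ (he : blockPrefix _ _ _ _ = _)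
  have hkk' : k = k' := by
    have := lt_or_eq_and_mem_of_blockPrefix_subset hk hs hS he.subset
    have := lt_or_eq_and_mem_of_blockPrefix_subset hk' hs' hS' he.symm.subset
    omega
  subst hkk'
  refine Prod.ext rfl (Subset.antisymm (fun r hr => ?_) (fun r hr => ?_))
  · simpa using lt_or_eq_and_mem_of_blockPrefix_subset hk hr hS he.subset
  · simpa using lt_or_eq_and_mem_of_blockPrefix_subset hk hr hS' he.symm.subset

theorem le_card_blockDownSets (q : ℕ) : (2 ^ t - 1) * q + 1 ≤ #(blockDownSets t (t * q)) := by
  set I := range q ×ˢ (range t).powerset.erase ∅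
  set f := fun p : ℕ × Finset ℕ => blockPrefix t (t * q) p.1 p.2
  have hI : #I = q * (2 ^ t - 1) := by simp [I, card_erase_of_mem]
  have hempty : ∅ ∉ I.image f := by
    simp only [mem_image, not_exists, not_and]
    rintro ⟨k, S⟩ hkS he
    simp only [I, mem_product, mem_range, mem_erase, mem_powerset, ne_eq,
      ← nonempty_iff_ne_empty] at hkS
    obtain ⟨hk, ⟨s, hs⟩, hS⟩ := hkS
    obtain ⟨x, hx, -⟩ := exists_mem_blockPrefix hk hs hS
    exact notMem_empty x (he ▸ hx)
  calc (2 ^ t - 1) * q + 1 = #(insert ∅ (I.image f)) := by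
        rw [card_insert_of_notMem hempty, card_image_of_injOn (blockPrefix_injOn q), hI, mul_comm]
    _ ≤ #(blockDownSets t (t * q)) := card_le_card <| insert_subset
        (mem_blockDownSets.2 fun _ hx => absurd hx (notMem_empty _))
        (image_subset_iff.2 fun p _ => blockPrefix_mem_blockDownSets p.1 p.2)

end Blocks

theorem forb_lower_bound_conjectural_construction_general (t m : ℕ) (ht : 2 ≤ t)
    (hdvd : t ∣ m) :
    (2 ^ t - 1) * m / t + 1 ≤ forb m (2 ^ (t - 2) + 1) := by
  obtain ⟨q, rfl⟩ := hdvd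
  have ht0 : 0 < t := by omega
  rw [mul_left_comm, Nat.mul_div_cancel_left _ ht0]
  exact (le_card_blockDownSets q).trans (card_le_forb (avoidsF010_blockDownSets ht0))

theorem forb_lower_bound_conjectural_construction (t m : ℕ) (ht : 2 ≤ t)
    (hm : 0 < m) (hdvd : t ∣ m) :
    (2 ^ t - 1) * m / t + 1 ≤ forb m (2 ^ (t - 2) + 1) :=
  forb_lower_bound_conjectural_construction_general t m ht hdvd
end

section
/- forb(5, F(0,7,1,0)) = 25; that is, the maximum cardinality of a family of subsets of {1,2,3,4,5} that avoids F(0,7,1,0) is exactly 25. -/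
/-!
A family `A` of subsets of `Fin 5` with at least 26 members misses at most 6 sets, fewer than the
8 sets separating any ordered pair `(i, j)` (containing `i` but not `j`). So some member of `A`
separates `(j, i)`, and avoidance leaves at most 6 of the 8 sets separating `(i, j)` in `A`: every
one of the 20 ordered pairs is separated by at least 2 missing sets. Double counting, a single set
`X` separates only `|X| (5 - |X|) ≤ 6` pairs, so the at most 6 missing sets account for at most
36 < 40 separations. Removing seven suitable sets shows that 25 is attained.
-/

open Finset

section Separating

variable {α : Type*} [Fintype α] [DecidableEq α]

-- A set `X` separates the ordered pair `(i, j)` when `i ∈ X` and `j ∉ X`.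

theorem card_separating_eq {i j : α} (hij : i ≠ j) :
    #{X : Finset α | i ∈ X ∧ j ∉ X} = 2 ^ (Fintype.card α - 2) := by
  calc #{X : Finset α | i ∈ X ∧ j ∉ X} = #({i, j}ᶜ : Finset α).powerset :=
        card_bij' (fun X _ => X.erase i) (fun X _ => insert i X) ?_ ?_ ?_ ?_
    _ = 2 ^ (Fintype.card α - 2) := by rw [card_powerset, card_compl, card_pair hij]
  all_goals
    intro X hX
    simp only [mem_filter, mem_univ, true_and, mem_powerset, subset_iff, mem_compl, mem_insert,
      mem_singleton, mem_erase] at hX ⊢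
  · grind
  · grind
  · exact insert_erase hX.1
  · exact erase_insert fun hi => hX hi (.inl rfl)

theorem sum_card_separating_eq (B : Finset (Finset α)) :
    ∑ ij : α × α, #{X ∈ B | ij.1 ∈ X ∧ ij.2 ∉ X} = ∑ X ∈ B, #X * (Fintype.card α - #X) := by
  calc _ = ∑ X ∈ B, #(univ.bipartiteBelow (fun (ij : α × α) X => ij.1 ∈ X ∧ ij.2 ∉ X) X) :=
        sum_card_bipartiteAbove_eq_sum_card_bipartiteBelow _
    _ = _ := by
      refine sum_congr rfl fun X _ => ?_
      rw [← card_compl, ← card_product]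
      congr 1; ext; simp

theorem four_mul_sum_card_separating_le (B : Finset (Finset α)) :
    4 * ∑ ij : α × α, #{X ∈ B | ij.1 ∈ X ∧ ij.2 ∉ X} ≤ Fintype.card α ^ 2 * #B := by
  rw [sum_card_separating_eq, mul_sum, mul_comm, ← smul_eq_mul, ← sum_const]
  refine sum_le_sum fun X _ => ?_
  calc 4 * (#X * (Fintype.card α - #X)) = 4 * #X * (Fintype.card α - #X) := (mul_assoc ..).symm
    _ ≤ (#X + (Fintype.card α - #X)) ^ 2 := four_mul_le_sq_add ..
    _ = Fintype.card α ^ 2 := by rw [Nat.add_sub_cancel' (card_le_univ X)]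

end Separating

namespace AvoidsF010

variable {p m : ℕ} {A : Finset (Finset (Fin m))}

theorem le_card_compl_separating (hA : AvoidsF010 p m A) (hAc : #Aᶜ < 2 ^ (m - 2))
    {i j : Fin m} (hij : i ≠ j) : 2 ^ (m - 2) - (p - 1) ≤ #{X ∈ Aᶜ | i ∈ X ∧ j ∉ X} := by
  have hsplit {k l : Fin m} (hkl : k ≠ l) :
      #{X ∈ A | k ∈ X ∧ l ∉ X} + #{X ∈ Aᶜ | k ∈ X ∧ l ∉ X} = 2 ^ (m - 2) := by
    rw [← card_union_of_disjoint (disjoint_filter_filter disjoint_compl_right), ← filter_union,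
      union_compl, card_separating_eq hkl, Fintype.card_fin]
  have hex : ∃ X ∈ A, j ∈ X ∧ i ∉ X := by
    by_contra! h
    have hempty : {X ∈ A | j ∈ X ∧ i ∉ X} = ∅ :=
      filter_eq_empty_iff.2 fun X hX hji => hji.2 (h X hX hji.1)
    have := hsplit hij.symm
    rw [hempty, card_empty, zero_add] at this
    have := card_le_card (filter_subset (fun X => j ∈ X ∧ i ∉ X) Aᶜ)
    omega
  have := hA i j hij hex
  have := hsplit hij
  omega

theorem four_mul_card_offDiag_mul_le (hA : AvoidsF010 p m A) (hAc : #Aᶜ < 2 ^ (m - 2)) :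
    4 * (m * (m - 1) * (2 ^ (m - 2) - (p - 1))) ≤ m ^ 2 * #Aᶜ :=
  calc 4 * (m * (m - 1) * (2 ^ (m - 2) - (p - 1)))
      = 4 * (#(univ : Finset (Fin m)).offDiag • (2 ^ (m - 2) - (p - 1))) := by
        rw [offDiag_card, card_univ, Fintype.card_fin, smul_eq_mul, Nat.mul_sub_one]
    _ ≤ 4 * ∑ ij ∈ univ.offDiag, #{X ∈ Aᶜ | ij.1 ∈ X ∧ ij.2 ∉ X} := by
        gcongr
        exact card_nsmul_le_sum _ _ _ fun ij hij =>
          hA.le_card_compl_separating hAc (mem_offDiag.1 hij).2.2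
    _ ≤ 4 * ∑ ij : Fin m × Fin m, #{X ∈ Aᶜ | ij.1 ∈ X ∧ ij.2 ∉ X} := by
        gcongr
        exact subset_univ _
    _ ≤ m ^ 2 * #Aᶜ := by simpa using four_mul_sum_card_separating_le Aᶜ

end AvoidsF010

theorem card_le_twentyFive_of_avoidsF010_seven {A : Finset (Finset (Fin 5))}
    (hA : AvoidsF010 7 5 A) : #A ≤ 25 := by
  by_contra! h
  have hAc : #Aᶜ ≤ 6 := by
    rw [card_compl, Fintype.card_finset, Fintype.card_fin]
    omega
  have : 160 ≤ 25 * #Aᶜ := by simpa using hA.four_mul_card_offDiag_mul_le (by norm_num; omega)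
  omega

-- Every ordered pair is separated by at least two of the seven removed sets, hence by at most
-- `8 - 2 = 6` members of the family.
def extremalFamily : Finset (Finset (Fin 5)) :=
  {{0, 1}, {0, 2}, {0, 3}, {1, 4}, {2, 4}, {3, 4}, {1, 2, 3}}ᶜ

theorem card_extremalFamily : #extremalFamily = 25 := by decide

theorem avoidsF010_extremalFamily : AvoidsF010 7 5 extremalFamily := by
  unfold AvoidsF010
  decide

theorem forb_five_F0710 : forb 5 7 = 25 :=
  IsGreatest.csSup_eq
    ⟨⟨extremalFamily, avoidsF010_extremalFamily, card_extremalFamily⟩,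
      fun _ ⟨_, hA, hcard⟩ => hcard ▸ card_le_twentyFive_of_avoidsF010_seven hA⟩
end
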